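/- arXiv:1312.4046 — 7 statements merged into one kernel-verified Lean document; each statement's English description precedes it below -/
import Mathlib

section
/- Let f:[0,∞)→[0,∞) be non-increasing and suppose there are ε, K > 0 such that K·f(t)^{1+ε} ≤ f(t-1) - f(t+1) for all t ≥ 1. Then there exists a constant C such that f(t) ≤ C·t^{-1/ε} for all t ≥ 1. -/
/-!
The power profile `g n = M n^(-1/ε)` is a supersolution of the recurrence
`K a(n+1)^(1+ε) ≤ a n - a(n+1)` as soon as `M` is large: by the mean value theorem
`g n - g (n+1) ≤ (1/ε) 2^(1/ε + 1) M (n+1)^(-1/ε - 1)`, while `K g(n+1)^(1+ε) = K M^ε · M (n+1)^(-1/ε - 1)`.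
Since `x ↦ K x^(1+ε)` is monotone, a subsolution starting below `g` stays below it. The sequence
`f(2n - 1)` is such a subsolution, and monotonicity of `f` passes the bound to all real `t ≥ 1`.
-/

open Real Set Filter

lemma rpow_neg_sub_rpow_neg_add_one_le {q x : ℝ} (hq : 0 ≤ q) (hx : 1 ≤ x) :
    x ^ (-q) - (x + 1) ^ (-q) ≤ q * 2 ^ (q + 1) * (x + 1) ^ (-(q + 1)) := by
  have hx₀ : 0 < x := by linarith
  obtain ⟨c, ⟨hxc, -⟩, hc⟩ := exists_hasDerivAt_eq_slope (fun y : ℝ => y ^ (-q))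
    (fun y => -q * y ^ (-q - 1)) (lt_add_one x)
    (continuousOn_id.rpow_const fun y hy => Or.inl (hx₀.trans_le hy.1).ne')
    (fun y hy => hasDerivAt_rpow_const (Or.inl (hx₀.trans hy.1).ne'))
  have hdiff : x ^ (-q) - (x + 1) ^ (-q) = q * c ^ (-(q + 1)) := by
    rw [show x + 1 - x = 1 by ring, div_one, show -q - 1 = -(q + 1) by ring] at hc
    linarith
  have hhalf : c ^ (-(q + 1)) ≤ ((x + 1) * 2⁻¹) ^ (-(q + 1)) :=
    rpow_le_rpow_of_nonpos (by positivity) (by linarith) (by linarith)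
  rw [mul_rpow (by positivity) (by norm_num), inv_rpow (by norm_num),
    rpow_neg (by norm_num : (0 : ℝ) ≤ 2), inv_inv] at hhalf
  rw [hdiff, mul_assoc]
  gcongr
  linarith

lemma le_of_subsolution_of_supersolution {φ : ℝ → ℝ} (hφ : MonotoneOn φ (Ici 0))
    {a g : ℕ → ℝ} (hg₀ : ∀ n, 0 ≤ g n) (ha : ∀ n ≥ 1, φ (a (n + 1)) ≤ a n - a (n + 1))
    (hg : ∀ n ≥ 1, g n - g (n + 1) ≤ φ (g (n + 1))) (h₁ : a 1 ≤ g 1) :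
    ∀ n ≥ 1, a n ≤ g n := by
  intro n hn
  induction n, hn using Nat.le_induction with
  | base => exact h₁
  | succ m hm ih =>
    by_contra! hlt
    have := hφ (hg₀ _) ((hg₀ _).trans hlt.le) hlt.le
    linarith [ha m hm, hg m hm]

lemma mul_rpow_neg_sub_le {ε K M : ℝ} (hε : 0 < ε) (hM : 0 ≤ M)
    (hKM : 1 / ε * 2 ^ (1 / ε + 1) ≤ K * M ^ ε) {n : ℕ} (hn : 1 ≤ n) :
    M * (n : ℝ) ^ (-(1 / ε)) - M * ((n + 1 : ℕ) : ℝ) ^ (-(1 / ε)) ≤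
      K * (M * ((n + 1 : ℕ) : ℝ) ^ (-(1 / ε))) ^ (1 + ε) := by
  set q := 1 / ε
  have hexp : -q * (1 + ε) = -(q + 1) := by
    linear_combination (-1 : ℝ) * (one_div_mul_cancel hε.ne' : q * ε = 1)
  push_cast
  calc M * (n : ℝ) ^ (-q) - M * ((n : ℝ) + 1) ^ (-q)
      = M * ((n : ℝ) ^ (-q) - ((n : ℝ) + 1) ^ (-q)) := by ring
    _ ≤ M * (q * 2 ^ (q + 1) * ((n : ℝ) + 1) ^ (-(q + 1))) := by
        gcongr
        exact rpow_neg_sub_rpow_neg_add_one_le (by positivity) (by exact_mod_cast hn)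
    _ ≤ M * (K * M ^ ε * ((n : ℝ) + 1) ^ (-(q + 1))) := by gcongr
    _ = K * (M * ((n : ℝ) + 1) ^ (-q)) ^ (1 + ε) := by
        rw [mul_rpow hM (by positivity), ← rpow_mul (by positivity), hexp,
          rpow_one_add' hM (by linarith)]
        ring

theorem exists_le_mul_rpow_neg_of_mul_rpow_le_sub {a : ℕ → ℝ} {ε K : ℝ} (hε : 0 < ε)
    (hK : 0 < K) (h : ∀ n ≥ 1, K * a (n + 1) ^ (1 + ε) ≤ a n - a (n + 1)) :
    ∃ C, 0 ≤ C ∧ ∀ n ≥ 1, a n ≤ C * (n : ℝ) ^ (-(1 / ε)) := by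
  obtain ⟨M, hM₀, hM₁, hKM⟩ : ∃ M, 0 ≤ M ∧ a 1 ≤ M ∧ 1 / ε * 2 ^ (1 / ε + 1) ≤ K * M ^ ε := by
    obtain ⟨M, hM₀, hM₁, hKM⟩ := ((eventually_ge_atTop 0).and ((eventually_ge_atTop (a 1)).and
      ((tendsto_rpow_atTop hε).eventually_ge_atTop (1 / ε * 2 ^ (1 / ε + 1) / K)))).exists
    exact ⟨M, hM₀, hM₁, (div_le_iff₀' hK).mp hKM⟩
  have hφ : MonotoneOn (fun x : ℝ => K * x ^ (1 + ε)) (Ici 0) := fun x hx y hy hxy =>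
    mul_le_mul_of_nonneg_left (monotoneOn_rpow_Ici_of_exponent_nonneg (by linarith) hx hy hxy)
      hK.le
  refine ⟨M, hM₀, le_of_subsolution_of_supersolution hφ (fun n => by positivity) h
    (fun n hn => mul_rpow_neg_sub_le hε hM₀ hKM hn) ?_⟩
  simpa using hM₁

/-- **Lemma B.?? (discrete Lojasiewicz decay).**
If `f : [0,∞) → [0,∞)` is non-increasing and satisfies the discrete differential inequality
`K · f(t)^{1+ε} ≤ f(t-1) - f(t+1)` for all `t ≥ 1`, where `ε, K > 0`, then there exists a
constant `C` so that `f(t) ≤ C · t^(-1/ε)` for all `t ≥ 1`. -/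
theorem stmt_0 (f : ℝ → ℝ) (ε K : ℝ) (hε : 0 < ε) (hK : 0 < K)
    (hnonneg : ∀ t : ℝ, 0 ≤ t → 0 ≤ f t)
    (hmono : ∀ s t : ℝ, 0 ≤ s → s ≤ t → f t ≤ f s)
    (hineq : ∀ t : ℝ, 1 ≤ t → K * f t ^ (1 + ε) ≤ f (t - 1) - f (t + 1)) :
    ∃ C : ℝ, ∀ t : ℝ, 1 ≤ t → f t ≤ C * t ^ (-(1 / ε)) := by
  have hodd : ∀ n ≥ 1, K * f (2 * ((n + 1 : ℕ) : ℝ) - 1) ^ (1 + ε) ≤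
      f (2 * (n : ℝ) - 1) - f (2 * ((n + 1 : ℕ) : ℝ) - 1) := by
    intro n hn
    have hn' : (1 : ℝ) ≤ n := by exact_mod_cast hn
    have hsucc : 2 * ((n + 1 : ℕ) : ℝ) - 1 = 2 * n + 1 := by push_cast; ring
    have hstep := hineq (2 * n) (by linarith)
    have hpow : f (2 * n + 1) ^ (1 + ε) ≤ f (2 * n) ^ (1 + ε) :=
      rpow_le_rpow (hnonneg _ (by linarith)) (hmono _ _ (by linarith) (by linarith)) (by linarith)
    rw [hsucc]
    nlinarith
  obtain ⟨C, hC₀, hC⟩ := exists_le_mul_rpow_neg_of_mul_rpow_le_sub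
    (a := fun n : ℕ => f (2 * (n : ℝ) - 1)) hε hK hodd
  refine ⟨C * 3 ^ (1 / ε), fun t ht => ?_⟩
  set n := ⌊(t + 1) / 2⌋₊
  have hn : 1 ≤ n := Nat.le_floor (by push_cast; linarith)
  have hn' : (1 : ℝ) ≤ n := by exact_mod_cast hn
  have h2n : 2 * (n : ℝ) ≤ t + 1 := by linarith [Nat.floor_le (by linarith : 0 ≤ (t + 1) / 2)]
  have h3n : t / 3 ≤ n := by linarith [Nat.sub_one_lt_floor ((t + 1) / 2)]
  calc f t ≤ f (2 * n - 1) := hmono _ _ (by linarith) (by linarith)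
    _ ≤ C * (n : ℝ) ^ (-(1 / ε)) := hC n hn
    _ ≤ C * (t / 3) ^ (-(1 / ε)) := mul_le_mul_of_nonneg_left
        (rpow_le_rpow_of_nonpos (by positivity) h3n (neg_nonpos.mpr (by positivity))) hC₀
    _ = C * 3 ^ (1 / ε) * t ^ (-(1 / ε)) := by
        rw [div_rpow (by linarith) (by norm_num), rpow_neg (by norm_num : (0 : ℝ) ≤ 3)]
        field_simp
end

section
/- Let f:[0,∞)→[0,∞) be non-increasing with K·f(t)^{1+ε} ≤ f(t-1) - f(t+1) for all t ≥ 1, where K > 0 and 0 < ε < 1. Then the series ∑_{j=1}^{∞} (f(j) - f(j+1))^{1/2} converges. -/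
/-!
Write `a n = f n`. Monotonicity turns the hypothesis into `K a(n+2)^{1+ε} ≤ a n - a(n+2)`, and
along the even indices this forces `a(2n)^{-ε}` to grow at least linearly, i.e.
`a n = O(n^{-1/ε})`; hence `∑ a n ^ s < ∞` for every `s > ε`. Fix such an `s < 1`. By AM-GM,
`(a n - a(n+1))^{1/2} ≤ ((a n - a(n+1)) a n^{-s} + a n^s) / 2`, and the first summand is at most
`(a n^{1-s} - a(n+1)^{1-s}) / (1-s)` by concavity of `x ↦ x^{1-s}`, so it telescopes.
-/

open Real

lemma rpow_le_rpow_add_mul_sub {p a b : ℝ} (hp0 : 0 ≤ p) (hp1 : p ≤ 1) (ha : 0 < a)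
    (hb : 0 ≤ b) : b ^ p ≤ a ^ p + p * a ^ (p - 1) * (b - a) := by
  have hbern := rpow_one_add_le_one_add_mul_self (s := b / a - 1)
    (by linarith [div_nonneg hb ha.le]) hp0 hp1
  rw [add_sub_cancel, div_rpow hb ha.le, div_le_iff₀ (rpow_pos_of_pos ha p)] at hbern
  calc b ^ p ≤ (1 + p * (b / a - 1)) * a ^ p := hbern
    _ = a ^ p + p * (a ^ p / a) * (b - a) := by field_simp
    _ = a ^ p + p * a ^ (p - 1) * (b - a) := by rw [rpow_sub_one ha.ne']

lemma mul_sub_mul_rpow_le_rpow_neg_sub_rpow_neg {ε x y : ℝ} (hε : 0 ≤ ε) (hε1 : ε ≤ 1)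
    (hy : 0 < y) (hyx : y ≤ x) : ε * (x - y) * x ^ (-1 - ε) ≤ y ^ (-ε) - x ^ (-ε) := by
  have hx : 0 < x := hy.trans_le hyx
  have hvu : y ^ ε ≤ x ^ ε := rpow_le_rpow hy.le hyx hε
  have htan := rpow_le_rpow_add_mul_sub hε hε1 hx hy.le
  rw [rpow_sub_one hx.ne'] at htan
  rw [rpow_neg hy.le, rpow_neg hx.le, show -1 - ε = -(1 + ε) by ring, rpow_neg hx.le,
    rpow_one_add' hx.le (by linarith)]
  calc ε * (x - y) * (x * x ^ ε)⁻¹ ≤ ε * (x - y) / (x * y ^ ε) := by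
        rw [← div_eq_mul_inv]; gcongr
    _ = ε * (x ^ ε / x) * (x - y) / (x ^ ε * y ^ ε) := by field_simp
    _ ≤ (x ^ ε - y ^ ε) / (x ^ ε * y ^ ε) := by gcongr; linarith
    _ = (y ^ ε)⁻¹ - (x ^ ε)⁻¹ := by field_simp

lemma min_le_rpow_neg_sub_rpow_neg {ε K X x y : ℝ} (hε : 0 < ε) (hε1 : ε ≤ 1) (hK : 0 ≤ K)
    (hy : 0 < y) (hxX : x ≤ X) (hrec : K * y ^ (1 + ε) ≤ x - y) :
    min (ε * K / 4) ((2 ^ ε - 1) * X ^ (-ε)) ≤ y ^ (-ε) - x ^ (-ε) := by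
  have hyx : y ≤ x := by nlinarith [mul_nonneg hK (rpow_nonneg hy.le (1 + ε))]
  have hx : 0 < x := hy.trans_le hyx
  -- Either `y` is comparable to `x` and the tangent line at `x` gives the gain, or `y < x / 2`
  -- and `y^{-ε} ≥ 2^ε x^{-ε}`.
  rcases le_or_gt x (2 * y) with hclose | hfar
  · refine (min_le_left _ _).trans ((?_ : ε * K / 4 ≤ _).trans
      (mul_sub_mul_rpow_le_rpow_neg_sub_rpow_neg hε.le hε1 hy hyx))
    have hpow : x ^ (1 + ε) ≤ 4 * y ^ (1 + ε) := calc
      x ^ (1 + ε) ≤ (2 * y) ^ (1 + ε) := by gcongr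
      _ = 2 ^ (1 + ε) * y ^ (1 + ε) := mul_rpow (by norm_num) hy.le
      _ ≤ 2 ^ (2 : ℝ) * y ^ (1 + ε) := by gcongr; norm_num; linarith
      _ = 4 * y ^ (1 + ε) := by norm_num
    rw [show -1 - ε = -(1 + ε) by ring, rpow_neg hx.le, ← div_eq_mul_inv,
      le_div_iff₀ (rpow_pos_of_pos hx _)]
    nlinarith [mul_le_mul_of_nonneg_left hpow (mul_nonneg hε.le hK)]
  · refine (min_le_right _ _).trans ?_
    have h2y : (2 : ℝ) ^ ε * x ^ (-ε) ≤ y ^ (-ε) := calc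
      (2 : ℝ) ^ ε * x ^ (-ε) = (x / 2) ^ (-ε) := by
        rw [div_rpow hx.le (by norm_num), rpow_neg (by norm_num : (0 : ℝ) ≤ 2)]; field_simp
      _ ≤ y ^ (-ε) := rpow_le_rpow_of_nonpos hy (by linarith) (by linarith)
    have hX : X ^ (-ε) ≤ x ^ (-ε) := rpow_le_rpow_of_nonpos hx hxX (by linarith)
    have h2 : (1 : ℝ) ≤ 2 ^ ε := one_le_rpow (by norm_num) hε.le
    nlinarith

lemma exists_pos_mul_mul_rpow_le_one {ε K : ℝ} (hε : 0 < ε) (hε1 : ε ≤ 1) (hK : 0 < K)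
    {b : ℕ → ℝ} (hb : ∀ n, 0 ≤ b n) (hrec : ∀ n, K * b (n + 1) ^ (1 + ε) ≤ b n - b (n + 1)) :
    ∃ c > 0, ∀ n : ℕ, c * n * b n ^ ε ≤ 1 := by
  have hanti : Antitone b := antitone_nat_of_succ_le fun n => by
    nlinarith [hrec n, mul_nonneg hK.le (rpow_nonneg (hb (n + 1)) (1 + ε))]
  set c := min (ε * K / 4) ((2 ^ ε - 1) * (b 0 + 1) ^ (-ε))
  have h2 : (1 : ℝ) < 2 ^ ε := one_lt_rpow (by norm_num) hε
  have hc : 0 < c :=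
    lt_min (by positivity) (mul_pos (by linarith) (rpow_pos_of_pos (by linarith [hb 0]) _))
  have hlin : ∀ n, 0 < b n → c * n ≤ b n ^ (-ε) := by
    intro n
    induction n with
    | zero => intro h; simpa using (rpow_pos_of_pos h _).le
    | succ n ih =>
      intro hpos
      have hstep := min_le_rpow_neg_sub_rpow_neg hε hε1 hK.le hpos
        (by linarith [hanti n.zero_le] : b n ≤ b 0 + 1) (hrec n)
      have := ih (hpos.trans_le (hanti n.le_succ))
      push_cast
      linarith
  refine ⟨c, hc, fun n => ?_⟩
  rcases (hb n).eq_or_lt with hzero | hpos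
  · simp [← hzero, zero_rpow hε.ne']
  · calc c * n * b n ^ ε ≤ b n ^ (-ε) * b n ^ ε := by gcongr; exact hlin n hpos
      _ = 1 := by rw [rpow_neg hpos.le, inv_mul_cancel₀ (rpow_pos_of_pos hpos ε).ne']

lemma summable_rpow_of_mul_mul_rpow_le_one {ε s c : ℝ} (hε : 0 < ε) (hs : ε < s) (hc : 0 < c)
    {b : ℕ → ℝ} (hb : ∀ n, 0 ≤ b n) (h : ∀ n : ℕ, c * n * b n ^ ε ≤ 1) :
    Summable fun n => b n ^ s := by
  have hp : 1 < s / ε := (one_lt_div hε).mpr hs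
  have hpseries : Summable fun n : ℕ => ((n + 1 : ℕ) : ℝ) ^ (-(s / ε)) :=
    (summable_nat_add_iff 1).mpr (summable_nat_rpow.mpr (by linarith))
  refine (summable_nat_add_iff 1).mp (Summable.of_nonneg_of_le
    (fun n => rpow_nonneg (hb _) _) (fun n => ?_) (hpseries.mul_left (c ^ (-(s / ε)))))
  have hn : (0 : ℝ) < n + 1 := by positivity
  have hbε : b (n + 1) ^ ε ≤ (c * (n + 1))⁻¹ := by
    rw [← one_div, le_div_iff₀ (by positivity), mul_comm]
    exact_mod_cast h (n + 1)
  calc b (n + 1) ^ s = (b (n + 1) ^ ε) ^ (s / ε) := by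
        rw [← rpow_mul (hb _), mul_div_cancel₀ _ hε.ne']
    _ ≤ ((c * (n + 1))⁻¹) ^ (s / ε) := by gcongr; exact rpow_nonneg (hb _) _
    _ = c ^ (-(s / ε)) * ((n + 1 : ℕ) : ℝ) ^ (-(s / ε)) := by
        rw [← rpow_neg_eq_inv_rpow, mul_rpow hc.le hn.le]; push_cast; rfl

lemma summable_rpow_of_rpow_le_sub_two {ε K s : ℝ} (hε : 0 < ε) (hε1 : ε ≤ 1) (hK : 0 < K)
    (hs : ε < s) {a : ℕ → ℝ} (ha : ∀ n, 0 ≤ a n) (hanti : Antitone a)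
    (hrec : ∀ n, K * a (n + 2) ^ (1 + ε) ≤ a n - a (n + 2)) :
    Summable fun n => a n ^ s := by
  obtain ⟨c, hc, hdecay⟩ := exists_pos_mul_mul_rpow_le_one hε hε1 hK (b := fun n => a (2 * n))
    (fun n => ha _) (fun n => by simpa only [mul_add] using hrec (2 * n))
  have heven : Summable fun n => a (2 * n) ^ s :=
    summable_rpow_of_mul_mul_rpow_le_one hε hs hc (fun n => ha _) hdecay
  refine heven.even_add_odd (heven.of_nonneg_of_le (fun n => rpow_nonneg (ha _) _) fun n => ?_)
  exact rpow_le_rpow (ha _) (hanti (Nat.le_succ _)) (by linarith)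

lemma mul_sub_mul_rpow_neg_le_rpow_sub_rpow {s a b : ℝ} (hs0 : 0 ≤ s) (hs1 : s ≤ 1) (hb : 0 ≤ b)
    (hba : b ≤ a) :
    (1 - s) * ((a - b) * a ^ (-s)) ≤ a ^ (1 - s) - b ^ (1 - s) := by
  rcases (hb.trans hba).eq_or_lt with ha | ha
  · obtain rfl : b = 0 := le_antisymm (ha ▸ hba) hb
    simp [← ha]
  · have := rpow_le_rpow_add_mul_sub (p := 1 - s) (by linarith) (by linarith) ha hb
    rw [show 1 - s - 1 = -s by ring] at this
    linarith

lemma summable_sub_mul_rpow_neg {s : ℝ} (hs0 : 0 ≤ s) (hs1 : s < 1) {a : ℕ → ℝ}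
    (ha : ∀ n, 0 ≤ a n) (hanti : Antitone a) :
    Summable fun n => (a n - a (n + 1)) * a n ^ (-s) := by
  have hterm : ∀ n, 0 ≤ (a n - a (n + 1)) * a n ^ (-s) := fun n =>
    mul_nonneg (sub_nonneg.mpr (hanti n.le_succ)) (rpow_nonneg (ha n) _)
  refine summable_of_sum_range_le hterm (c := a 0 ^ (1 - s) / (1 - s)) fun N => ?_
  rw [le_div_iff₀ (by linarith), Finset.sum_mul]
  calc ∑ n ∈ Finset.range N, (a n - a (n + 1)) * a n ^ (-s) * (1 - s)
      ≤ ∑ n ∈ Finset.range N, (a n ^ (1 - s) - a (n + 1) ^ (1 - s)) :=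
        Finset.sum_le_sum fun n _ => by
          rw [mul_comm]
          exact mul_sub_mul_rpow_neg_le_rpow_sub_rpow hs0 hs1.le (ha _) (hanti n.le_succ)
    _ = a 0 ^ (1 - s) - a N ^ (1 - s) := Finset.sum_range_sub' _ _
    _ ≤ a 0 ^ (1 - s) := sub_le_self _ (rpow_nonneg (ha N) _)

lemma rpow_one_half_le_mul_rpow_neg_add_rpow {s d a : ℝ} (hd : 0 ≤ d) (hda : d ≤ a) :
    d ^ (1 / 2 : ℝ) ≤ (d * a ^ (-s) + a ^ s) / 2 := by
  rcases (hd.trans hda).eq_or_lt with ha | ha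
  · obtain rfl : d = 0 := le_antisymm (ha ▸ hda) hd
    simp only [← ha, zero_mul, zero_add]
    rw [zero_rpow (by norm_num)]
    positivity
  · have hamgm := geom_mean_le_arith_mean2_weighted (w₁ := 1 / 2) (w₂ := 1 / 2)
      (p₁ := d * a ^ (-s)) (p₂ := a ^ s) (by norm_num) (by norm_num)
      (mul_nonneg hd (rpow_nonneg ha.le _)) (rpow_nonneg ha.le _) (by norm_num)
    rw [← mul_rpow (mul_nonneg hd (rpow_nonneg ha.le _)) (rpow_nonneg ha.le _), mul_assoc,
      ← rpow_add ha, neg_add_cancel, rpow_zero, mul_one] at hamgm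
    linarith

lemma summable_rpow_one_half_sub_of_summable_rpow {s : ℝ} (hs0 : 0 ≤ s) (hs1 : s < 1)
    {a : ℕ → ℝ} (ha : ∀ n, 0 ≤ a n) (hanti : Antitone a) (hsum : Summable fun n => a n ^ s) :
    Summable fun n => (a n - a (n + 1)) ^ (1 / 2 : ℝ) :=
  (((summable_sub_mul_rpow_neg hs0 hs1 ha hanti).add hsum).div_const 2).of_nonneg_of_le
    (fun n => rpow_nonneg (sub_nonneg.mpr (hanti n.le_succ)) _)
    fun n => rpow_one_half_le_mul_rpow_neg_add_rpow (sub_nonneg.mpr (hanti n.le_succ))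
      (by linarith [ha (n + 1)])

/-- If `f : [0,∞) → [0,∞)` is non-increasing and satisfies
`K · f(t)^{1+ε} ≤ f(t-1) - f(t+1)` for all `t ≥ 1`, where `K > 0` and `0 < ε < 1`, then
the series `∑_{j=1}^∞ (f(j) - f(j+1))^{1/2}` converges. -/
theorem stmt_1 (f : ℝ → ℝ) (ε K : ℝ) (hε : 0 < ε) (hε1 : ε < 1) (hK : 0 < K)
    (hnonneg : ∀ t : ℝ, 0 ≤ t → 0 ≤ f t)
    (hmono : ∀ s t : ℝ, 0 ≤ s → s ≤ t → f t ≤ f s)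
    (hineq : ∀ t : ℝ, 1 ≤ t → K * f t ^ (1 + ε) ≤ f (t - 1) - f (t + 1)) :
    Summable (fun j : ℕ => (f ((j : ℝ) + 1) - f ((j : ℝ) + 2)) ^ ((1 : ℝ) / 2)) := by
  set a : ℕ → ℝ := fun n => f n
  have ha : ∀ n, 0 ≤ a n := fun n => hnonneg _ n.cast_nonneg
  have hanti : Antitone a := fun m n h => hmono _ _ m.cast_nonneg (Nat.cast_le.mpr h)
  have hrec : ∀ n, K * a (n + 2) ^ (1 + ε) ≤ a n - a (n + 2) := fun n => calc
    K * a (n + 2) ^ (1 + ε) ≤ K * a (n + 1) ^ (1 + ε) := by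
      gcongr; exacts [ha _, hanti (by omega)]
    _ ≤ a n - a (n + 2) := by
      simpa [a, add_assoc, one_add_one_eq_two] using hineq (n + 1) (by simp)
  have hsum := summable_rpow_of_rpow_le_sub_two hε hε1.le hK (s := (1 + ε) / 2) (by linarith)
    ha hanti hrec
  have := (summable_nat_add_iff 1).mpr
    (summable_rpow_one_half_sub_of_summable_rpow (by linarith) (by linarith) ha hanti hsum)
  simpa [a, add_assoc, one_add_one_eq_two] using this
end

section
/- Let g: [0,∞) → [0,∞) be continuous with ∫_0^∞ g(s)² ds < ∞ and suppose g(t)² = -f'(t) for a C¹ function f satisfying 0 ≤ f(t) ≤ C·t^{-1/(2β-1)} for some β ∈ (1/2,1). Then ∫_0^∞ g(s) ds < ∞. -/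
/-!
Since `f ≥ 0` decays like `t ^ (-r)` with `r = 1 / (2β - 1) > 1`, integrating `-f'` against the
weight `t ^ p` for some `1 < p < r` by parts shows `∫₁^∞ t ^ p g(t)² dt < ∞`. Cauchy–Schwarz with the
weight, in the pointwise form `|g| ≤ (t ^ p g² + t ^ (-p)) / 2`, then gives `∫₁^∞ g < ∞`.
-/

open MeasureTheory Set Filter Real intervalIntegral
open scoped Interval

lemma abs_le_half_mul_sq_add_inv {x y : ℝ} (hy : 0 < y) : |x| ≤ (y * x ^ 2 + y⁻¹) / 2 := by
  rw [le_div_iff₀ two_pos, ← sq_abs x]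
  have h := sq_nonneg (y * |x| - 1)
  have hyinv : y * y⁻¹ = 1 := mul_inv_cancel₀ hy.ne'
  nlinarith

lemma integral_rpow_mul_deriv {f f' : ℝ → ℝ} {a b : ℝ} (p : ℝ) (ha : 0 < a) (hb : 0 < b)
    (hf : ∀ x ∈ [[a, b]], HasDerivAt f (f' x) x) (hf' : IntervalIntegrable f' volume a b) :
    ∫ x in a..b, x ^ p * f' x =
      b ^ p * f b - a ^ p * f a - p * ∫ x in a..b, x ^ (p - 1) * f x := by
  have hpos : ∀ x ∈ [[a, b]], 0 < x := fun x hx ↦ (lt_min ha hb).trans_le hx.1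
  have hpow : ∀ x ∈ [[a, b]], HasDerivAt (fun x ↦ x ^ p) (p * x ^ (p - 1)) x := fun x hx ↦
    hasDerivAt_rpow_const (Or.inl (hpos x hx).ne')
  have hpow' : IntervalIntegrable (fun x ↦ p * x ^ (p - 1)) volume a b :=
    (ContinuousOn.rpow_const continuousOn_id fun x hx ↦ Or.inl (hpos x hx).ne').intervalIntegrable
      |>.const_mul p
  rw [integral_mul_deriv_eq_deriv_mul hpow hf hpow' hf', ← intervalIntegral.integral_const_mul]
  simp only [mul_assoc]

lemma integrableOn_Ioi_rpow_mul_of_le_rpow {f : ℝ → ℝ} {a C r p : ℝ} (ha : 0 < a)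
    (hf : Continuous f) (hf0 : ∀ x, a ≤ x → 0 ≤ f x) (hdecay : ∀ x, a ≤ x → f x ≤ C * x ^ (-r))
    (hpr : p < r) :
    IntegrableOn (fun x ↦ x ^ (p - 1) * f x) (Ioi a) := by
  have hdom : IntegrableOn (fun x : ℝ ↦ C * x ^ (p - 1 - r)) (Ioi a) :=
    (integrableOn_Ioi_rpow_of_lt (by linarith) ha).const_mul C
  refine hdom.mono' ((ContinuousOn.rpow_const continuousOn_id fun x hx ↦
    Or.inl (ha.trans hx).ne').mul hf.continuousOn |>.aestronglyMeasurable measurableSet_Ioi) ?_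
  filter_upwards [ae_restrict_mem measurableSet_Ioi] with x hx
  have hx0 : 0 < x := ha.trans hx
  rw [norm_of_nonneg (mul_nonneg (rpow_nonneg hx0.le _) (hf0 x hx.le)), sub_eq_add_neg _ r,
    rpow_add hx0, mul_left_comm]
  exact mul_le_mul_of_nonneg_left (hdecay x hx.le) (rpow_nonneg hx0.le _)

lemma integrableOn_Ioi_rpow_mul_neg_deriv {f f' : ℝ → ℝ} {a C r p : ℝ} (ha : 0 < a)
    (hf : ∀ x, HasDerivAt f (f' x) x) (hf' : Continuous f') (hf'0 : ∀ x, a ≤ x → f' x ≤ 0)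
    (hf0 : ∀ x, a ≤ x → 0 ≤ f x) (hdecay : ∀ x, a ≤ x → f x ≤ C * x ^ (-r))
    (hp : 0 ≤ p) (hpr : p < r) :
    IntegrableOn (fun x ↦ x ^ p * -f' x) (Ioi a) := by
  have hf_cont : Continuous f := continuous_iff_continuousAt.2 fun x ↦ (hf x).continuousAt
  have htail := integrableOn_Ioi_rpow_mul_of_le_rpow ha hf_cont hf0 hdecay hpr
  refine integrableOn_Ioi_of_intervalIntegral_norm_bounded (l := atTop) (b := id)
    (a ^ p * f a + p * ∫ x in Ioi a, x ^ (p - 1) * f x) a (fun T ↦ ?_) tendsto_id ?_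
  · exact ((continuous_rpow_const hp).mul hf'.neg).integrableOn_Icc.mono_set Ioc_subset_Icc_self
  filter_upwards [eventually_ge_atTop a] with T hT
  have hsub : ∫ x in a..T, x ^ (p - 1) * f x ≤ ∫ x in Ioi a, x ^ (p - 1) * f x := by
    rw [integral_of_le hT]
    refine setIntegral_mono_set htail ?_ (Eventually.of_forall Ioc_subset_Ioi_self)
    filter_upwards [ae_restrict_mem measurableSet_Ioi] with x hx
    exact mul_nonneg (rpow_nonneg (ha.trans hx).le _) (hf0 x hx.le)
  have hT0 : 0 ≤ T ^ p * f T := mul_nonneg (rpow_nonneg (ha.trans_le hT).le _) (hf0 T hT)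
  calc ∫ x in a..T, ‖x ^ p * -f' x‖
      = -∫ x in a..T, x ^ p * f' x := by
        rw [← intervalIntegral.integral_neg]
        refine integral_congr fun x hx ↦ ?_
        rw [uIcc_of_le hT] at hx
        rw [norm_of_nonneg (mul_nonneg (rpow_nonneg (ha.trans_le hx.1).le _)
          (neg_nonneg.2 (hf'0 x hx.1))), mul_neg]
    _ = a ^ p * f a - T ^ p * f T + p * ∫ x in a..T, x ^ (p - 1) * f x := by
        rw [integral_rpow_mul_deriv p ha (ha.trans_le hT) (fun x _ ↦ hf x)
          (hf'.intervalIntegrable a T)]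
        ring
    _ ≤ a ^ p * f a + p * ∫ x in Ioi a, x ^ (p - 1) * f x := by
        nlinarith [mul_le_mul_of_nonneg_left hsub hp]

lemma integrableOn_Ioi_of_rpow_mul_sq {g : ℝ → ℝ} {a p : ℝ} (ha : 0 < a)
    (hg : AEStronglyMeasurable g (volume.restrict (Ioi a))) (hp : 1 < p)
    (hsq : IntegrableOn (fun x ↦ x ^ p * g x ^ 2) (Ioi a)) : IntegrableOn g (Ioi a) := by
  refine ((hsq.add (integrableOn_Ioi_rpow_of_lt (neg_lt_neg hp) ha)).div_const 2).mono' hg ?_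
  filter_upwards [ae_restrict_mem measurableSet_Ioi] with x hx
  rw [norm_eq_abs, Pi.add_apply, rpow_neg (ha.trans hx).le]
  exact abs_le_half_mul_sq_add_inv (rpow_pos_of_pos (ha.trans hx) p)

theorem stmt_3_general (f g : ℝ → ℝ) (β C : ℝ) (hβ : 1 / 2 < β) (hβ1 : β < 1)
    (hf : ContDiff ℝ 1 f) (hg : Continuous g)
    (hrel : ∀ t : ℝ, 0 ≤ t → g t ^ 2 = -(deriv f t))
    (hfnonneg : ∀ t : ℝ, 0 ≤ t → 0 ≤ f t)
    (hdecay : ∀ t : ℝ, 1 ≤ t → f t ≤ C * t ^ (-(1 / (2 * β - 1)))) :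
    IntegrableOn g (Set.Ici (0 : ℝ)) := by
  set r := 1 / (2 * β - 1)
  have hr : 1 < r := by rw [lt_div_iff₀ (by linarith)]; linarith
  have hderiv : ∀ x, HasDerivAt f (deriv f x) x := fun x ↦
    (hf.differentiable one_ne_zero x).hasDerivAt
  have hweighted : IntegrableOn (fun x ↦ x ^ ((1 + r) / 2) * g x ^ 2) (Ioi 1) := by
    refine (integrableOn_Ioi_rpow_mul_neg_deriv (p := (1 + r) / 2) one_pos hderiv (hf.continuous_deriv le_rfl)
      (fun x hx ↦ ?_) (fun x hx ↦ hfnonneg x (by linarith)) hdecay (by linarith)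
      (by linarith)).congr_fun (fun x hx ↦ ?_) measurableSet_Ioi
    · linarith [hrel x (by linarith), sq_nonneg (g x)]
    · rw [hrel x (zero_lt_one.trans hx).le]
  rw [← Icc_union_Ioi_eq_Ici zero_le_one]
  exact hg.integrableOn_Icc.union
    (integrableOn_Ioi_of_rpow_mul_sq one_pos hg.aestronglyMeasurable (by linarith) hweighted)

/-- Let `g : [0,∞) → [0,∞)` be continuous with `∫₀^∞ g(s)² ds < ∞` and suppose
`g(t)² = -f'(t)` for a `C¹` function `f` satisfying `0 ≤ f(t) ≤ C·t^{-1/(2β-1)}` for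
some `β ∈ (1/2, 1)`.  Then `∫₀^∞ g(s) ds < ∞`. -/
theorem stmt_3 (f g : ℝ → ℝ) (β C : ℝ) (hβ : 1 / 2 < β) (hβ1 : β < 1)
    (hf : ContDiff ℝ 1 f) (hg : Continuous g)
    (hgnonneg : ∀ s : ℝ, 0 ≤ s → 0 ≤ g s)
    (hgsq : IntegrableOn (fun s => g s ^ 2) (Set.Ici (0 : ℝ)))
    (hrel : ∀ t : ℝ, 0 ≤ t → g t ^ 2 = -(deriv f t))
    (hfnonneg : ∀ t : ℝ, 0 ≤ t → 0 ≤ f t)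
    (hdecay : ∀ t : ℝ, 1 ≤ t → f t ≤ C * t ^ (-(1 / (2 * β - 1)))) :
    IntegrableOn g (Set.Ici (0 : ℝ)) :=
  stmt_3_general f g β C hβ hβ1 hf hg hrel hfnonneg hdecay
end

section
/- Let f: ℝⁿ → ℝ be smooth with f(0) = 0 and ∇f(0) = 0, with Hessian at 0 diagonal in coordinates x = (y, z) where the eigenvalues a_i over the y-coordinates satisfy |a_i| ≥ a > 0 and the eigenvalues over the z-coordinates vanish. Then there exist C > 0 and a neighborhood U of 0 such that for all x ∈ U with |z|² ≤ ε|y| (ε > 0 sufficiently small): |f(x)|^{2/3} ≤ C·|∇f(x)|. -/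
open EuclideanSpace Metric

section Helpers

lemma seg_bound' {E F : Type*} [NormedAddCommGroup E] [NormedSpace ℝ E]
    [NormedAddCommGroup F] [NormedSpace ℝ F] {h : E → F} {r C : ℝ} {k : ℕ}
    (hC : 0 ≤ C) (hdiff : Differentiable ℝ h) (h0 : h 0 = 0)
    (hb : ∀ y ∈ ball (0:E) r, ‖fderiv ℝ h y‖ ≤ C * ‖y‖ ^ k) :
    ∀ x ∈ ball (0:E) r, ‖h x‖ ≤ C * ‖x‖ ^ (k+1) := by
  intro x hx
  have hs : Convex ℝ (ball (0:E) r ∩ closedBall 0 ‖x‖) :=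
    (convex_ball _ _).inter (convex_closedBall _ _)
  have h0m : (0:E) ∈ ball (0:E) r ∩ closedBall 0 ‖x‖ := by
    constructor
    · simpa using lt_of_le_of_lt (norm_nonneg x) (by simpa using hx)
    · simp [norm_nonneg]
  have hxm : x ∈ ball (0:E) r ∩ closedBall 0 ‖x‖ := ⟨hx, by simp⟩
  have key := hs.norm_image_sub_le_of_norm_fderiv_le (fun y _ => hdiff y)
    (fun y hy => le_trans (hb y hy.1) (by
      have : ‖y‖ ≤ ‖x‖ := by simpa using hy.2
      exact mul_le_mul_of_nonneg_left (pow_le_pow_left₀ (norm_nonneg _) this k) hC)) hxm h0m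
  simpa [h0, pow_succ, mul_assoc] using key

lemma cubic_bound' {E F : Type*} [NormedAddCommGroup E] [NormedSpace ℝ E]
    [NormedAddCommGroup F] [NormedSpace ℝ F] {h : E → F}
    (hh : ContDiff ℝ (⊤ : ℕ∞) h) (h0 : h 0 = 0) (h1 : fderiv ℝ h 0 = 0)
    (h2 : fderiv ℝ (fderiv ℝ h) 0 = 0) :
    ∃ K > (0:ℝ), ∃ r > (0:ℝ), ∀ x ∈ ball (0:E) r,
      ‖h x‖ ≤ K * ‖x‖ ^ 3 ∧ ‖fderiv ℝ h x‖ ≤ K * ‖x‖ ^ 2 := by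
  set H := fderiv ℝ h with hH
  have hHsm : ContDiff ℝ (⊤ : ℕ∞) H := hh.fderiv_right (by simp)
  have hGsm : ContDiff ℝ (⊤ : ℕ∞) (fderiv ℝ H) := hHsm.fderiv_right (by simp)
  obtain ⟨K₀, t, ht, hlip⟩ := (hGsm.contDiffAt (x := 0)).of_le (by simp) |>.exists_lipschitzOnWith
  obtain ⟨r, hr, hball⟩ := Metric.mem_nhds_iff.1 ht
  set K : ℝ := max (K₀ : ℝ) 1 with hK
  have hK0 : (0:ℝ) < K := lt_of_lt_of_le one_pos (le_max_right _ _)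
  have hG : ∀ x ∈ ball (0:E) r, ‖fderiv ℝ H x‖ ≤ K * ‖x‖ ^ 1 := by
    intro x hx
    have := hlip.dist_le_mul x (hball hx) 0 (hball (by simpa using hr))
    rw [h2, dist_zero_right] at this
    calc ‖fderiv ℝ H x‖ ≤ K₀ * ‖x‖ := (by exact (dist_zero_right (fderiv ℝ H x)).symm.le.trans this)
      _ ≤ K * ‖x‖ ^ 1 := by
          rw [pow_one]
          exact mul_le_mul_of_nonneg_right (le_max_left _ _) (norm_nonneg _)
  have hH2 : ∀ x ∈ ball (0:E) r, ‖fderiv ℝ h x‖ ≤ K * ‖x‖ ^ 2 :=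
    seg_bound' hK0.le (hHsm.differentiable (by simp)) h1 hG
  have hh3 : ∀ x ∈ ball (0:E) r, ‖h x‖ ≤ K * ‖x‖ ^ 3 :=
    seg_bound' hK0.le (hh.differentiable (by simp)) h0 hH2
  exact ⟨K, hK0, r, hr, fun x hx => ⟨hh3 x hx, hH2 x hx⟩⟩

variable {n : ℕ}

noncomputable def Lmap (Y : Finset (Fin n)) (A : Fin n → ℝ) :
    EuclideanSpace ℝ (Fin n) →L[ℝ] EuclideanSpace ℝ (Fin n) →L[ℝ] ℝ :=
  ∑ i ∈ Y, A i • ((EuclideanSpace.proj i).smulRight (EuclideanSpace.proj i))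

lemma Lmap_apply (Y : Finset (Fin n)) (A : Fin n → ℝ) (v w : EuclideanSpace ℝ (Fin n)) :
    Lmap Y A v w = ∑ i ∈ Y, A i * v i * w i := by
  simp only [Lmap, ContinuousLinearMap.sum_apply, ContinuousLinearMap.smul_apply,
    ContinuousLinearMap.smulRight_apply, PiLp.proj_apply, smul_eq_mul]
  exact Finset.sum_congr rfl fun i _ => by ring

lemma hasFDerivAt_Q (Y : Finset (Fin n)) (A : Fin n → ℝ) (x : EuclideanSpace ℝ (Fin n)) :
    HasFDerivAt (fun x : EuclideanSpace ℝ (Fin n) => ∑ i ∈ Y, (A i / 2) * x i ^ 2)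
      (Lmap Y A x) x := by
  have key : ∀ i : Fin n, HasFDerivAt (fun x : EuclideanSpace ℝ (Fin n) => (A i / 2) * x i ^ 2)
      ((A i * x i) • EuclideanSpace.proj (𝕜 := ℝ) i) x := by
    intro i
    have hp : HasFDerivAt (fun x : EuclideanSpace ℝ (Fin n) => x i)
        (EuclideanSpace.proj (𝕜 := ℝ) i) x := by
      simpa using (EuclideanSpace.proj (𝕜 := ℝ) i).hasFDerivAt
    have h2 := (hp.mul hp).const_mul (A i / 2)
    have heq : (A i / 2) • (x i • EuclideanSpace.proj (𝕜 := ℝ) i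
        + x i • EuclideanSpace.proj (𝕜 := ℝ) i) = (A i * x i) • EuclideanSpace.proj (𝕜 := ℝ) i := by
      ext w
      simp only [ContinuousLinearMap.smul_apply, ContinuousLinearMap.add_apply,
        PiLp.proj_apply, smul_eq_mul]
      ring
    have hfun : (fun x : EuclideanSpace ℝ (Fin n) => (A i / 2) * x i ^ 2)
        = fun x : EuclideanSpace ℝ (Fin n) => (A i / 2) * (x i * x i) := by
      funext y; ring
    rw [hfun, ← heq]
    exact h2
  have hsum := HasFDerivAt.fun_sum (fun i (_ : i ∈ Y) => key i)
  have heq2 : Lmap Y A x = ∑ i ∈ Y, (A i * x i) • EuclideanSpace.proj (𝕜 := ℝ) i := by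
    ext w
    simp only [Lmap, ContinuousLinearMap.sum_apply, ContinuousLinearMap.smul_apply,
      ContinuousLinearMap.smulRight_apply, PiLp.proj_apply, smul_eq_mul]
    exact Finset.sum_congr rfl fun i _ => by ring
  rw [heq2]
  exact hsum

lemma clm2_ext {T S : EuclideanSpace ℝ (Fin n) →L[ℝ] EuclideanSpace ℝ (Fin n) →L[ℝ] ℝ}
    (h : ∀ j k, T (EuclideanSpace.single j 1) (EuclideanSpace.single k 1)
      = S (EuclideanSpace.single j 1) (EuclideanSpace.single k 1)) : T = S := by
  have hrep : ∀ v : EuclideanSpace ℝ (Fin n), ∑ i, v i • EuclideanSpace.single i (1:ℝ) = v :=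
    fun v => by
      simpa [EuclideanSpace.basisFun_apply] using (EuclideanSpace.basisFun (Fin n) ℝ).sum_repr v
  ext v w
  rw [← hrep v, ← hrep w]
  simp only [map_sum, map_smul, ContinuousLinearMap.sum_apply, ContinuousLinearMap.smul_apply,
    smul_eq_mul, h]

lemma hessian_eq (f : EuclideanSpace ℝ (Fin n) → ℝ) (Y : Finset (Fin n))
    (hdiag : ∀ i j : Fin n, i ≠ j →
      iteratedFDeriv ℝ 2 f 0 ![EuclideanSpace.single i 1, EuclideanSpace.single j 1] = 0)
    (hZ : ∀ i ∉ Y,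
      iteratedFDeriv ℝ 2 f 0 ![EuclideanSpace.single i 1, EuclideanSpace.single i 1] = 0) :
    fderiv ℝ (fderiv ℝ f) 0 =
      Lmap Y (fun i => iteratedFDeriv ℝ 2 f 0 ![EuclideanSpace.single i 1,
        EuclideanSpace.single i 1]) := by
  set A : Fin n → ℝ := fun i => iteratedFDeriv ℝ 2 f 0 ![EuclideanSpace.single i 1,
    EuclideanSpace.single i 1] with hA
  apply clm2_ext
  intro j k
  have hT : fderiv ℝ (fderiv ℝ f) 0 (EuclideanSpace.single j 1) (EuclideanSpace.single k 1)
      = iteratedFDeriv ℝ 2 f 0 ![EuclideanSpace.single j 1, EuclideanSpace.single k 1] := by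
    rw [iteratedFDeriv_two_apply]
    simp
  rw [hT, Lmap_apply]
  have hterm : ∀ i : Fin n, A i * (EuclideanSpace.single j (1:ℝ)) i
      * (EuclideanSpace.single k (1:ℝ)) i = if i = j ∧ i = k then A i else 0 := by
    intro i
    by_cases hij : i = j <;> by_cases hik : i = k <;>
      simp [EuclideanSpace.single_apply, hij, hik]
  rw [Finset.sum_congr rfl fun i _ => hterm i]
  by_cases hjk : j = k
  · subst hjk
    simp only [and_self]
    rw [Finset.sum_ite_eq' Y j A]
    by_cases hjY : j ∈ Y
    · simp [hjY, hA]
    · simp [hjY, hZ j hjY]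
  · rw [hdiag j k hjk]
    rw [Finset.sum_eq_zero]
    intro i hi
    simp only [ite_eq_right_iff, and_imp]
    rintro rfl rfl
    exact absurd rfl hjk

end Helpers

set_option maxHeartbeats 1000000 in
/-- Let `f : ℝⁿ → ℝ` be smooth with `f(0) = 0` and `∇f(0) = 0`, whose Hessian at `0` is
diagonal in coordinates `x = (y, z)` (the `y`-coordinates indexed by the set `Y`), with the
eigenvalues `aᵢ` over the `y`-coordinates satisfying `|aᵢ| ≥ a > 0` and the eigenvalues over the
`z`-coordinates vanishing.  Then there exist `ε > 0`, `C > 0` and a neighborhood `U` of `0`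
such that for all `x ∈ U` with `|z|² ≤ ε·|y|` one has `|f(x)|^{2/3} ≤ C·|∇f(x)|`. -/
theorem stmt_6 (n : ℕ) (f : EuclideanSpace ℝ (Fin n) → ℝ) (Y : Finset (Fin n)) (a : ℝ)
    (hf : ContDiff ℝ (⊤ : ℕ∞) f) (hf0 : f 0 = 0) (hgrad0 : gradient f 0 = 0) (ha : 0 < a)
    (hdiag : ∀ i j : Fin n, i ≠ j →
      iteratedFDeriv ℝ 2 f 0 ![EuclideanSpace.single i 1, EuclideanSpace.single j 1] = 0)
    (hY : ∀ i ∈ Y, a ≤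
      |iteratedFDeriv ℝ 2 f 0 ![EuclideanSpace.single i 1, EuclideanSpace.single i 1]|)
    (hZ : ∀ i ∉ Y,
      iteratedFDeriv ℝ 2 f 0 ![EuclideanSpace.single i 1, EuclideanSpace.single i 1] = 0) :
    ∃ ε > (0 : ℝ), ∃ C > (0 : ℝ), ∃ U ∈ nhds (0 : EuclideanSpace ℝ (Fin n)),
      ∀ x ∈ U,
        Real.sqrt (∑ i ∈ Yᶜ, x i ^ 2) ^ 2 ≤ ε * Real.sqrt (∑ i ∈ Y, x i ^ 2) →
        |f x| ^ ((2 : ℝ) / 3) ≤ C * ‖gradient f x‖ := by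

  by_cases hYne : Y.Nonempty
  case neg =>
    refine ⟨1, one_pos, 1, one_pos, Set.univ, Filter.univ_mem, ?_⟩
    intro x _ hcone
    have hYe := Finset.not_nonempty_iff_eq_empty.1 hYne
    have ht2 : (0:ℝ) ≤ ∑ i ∈ Yᶜ, x i ^ 2 := Finset.sum_nonneg fun i _ => sq_nonneg _
    have hY0 : Real.sqrt (∑ i ∈ Y, x i ^ 2) = 0 := by rw [hYe]; simp
    rw [Real.sq_sqrt ht2, hY0, mul_zero] at hcone
    have hx0 : x = 0 := by
      ext i
      have hi : i ∈ Yᶜ := by simp [hYe]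
      have := (Finset.sum_eq_zero_iff_of_nonneg (fun i _ => sq_nonneg (x i))).1
        (le_antisymm hcone ht2) i hi
      exact pow_eq_zero_iff (n := 2) (by norm_num) |>.1 this
    rw [hx0, hf0]
    simp only [abs_zero]
    rw [Real.zero_rpow (by norm_num)]
    positivity
  -- main case : Y nonempty
  set A : Fin n → ℝ := fun i => iteratedFDeriv ℝ 2 f 0 ![EuclideanSpace.single i 1,
    EuclideanSpace.single i 1] with hA
  set Q : EuclideanSpace ℝ (Fin n) → ℝ := fun x => ∑ i ∈ Y, (A i / 2) * x i ^ 2 with hQ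
  set g : EuclideanSpace ℝ (Fin n) → ℝ := fun x => f x - Q x with hgdef
  have hQsm : ContDiff ℝ (⊤ : ℕ∞) Q :=
    ContDiff.sum fun i _ => contDiff_const.mul (by simpa using ((EuclideanSpace.proj (𝕜 := ℝ) i).contDiff (n := (⊤ : ℕ∞))).pow 2)
  have hgsm : ContDiff ℝ (⊤ : ℕ∞) g := hf.sub hQsm
  have hfd0 : fderiv ℝ f 0 = 0 := by
    unfold gradient at hgrad0; simpa using hgrad0
  have hQd : ∀ x, fderiv ℝ Q x = Lmap Y A x := fun x => (hasFDerivAt_Q Y A x).fderiv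
  have hgd : ∀ x, fderiv ℝ g x = fderiv ℝ f x - Lmap Y A x := by
    intro x
    rw [hgdef]
    rw [fderiv_fun_sub (hf.differentiable (by simp) x) (hQsm.differentiable (by simp) x), hQd x]
  have hg0 : g 0 = 0 := by
    simp [hgdef, hQ, hf0]
  have hgd0 : fderiv ℝ g 0 = 0 := by
    rw [hgd 0, hfd0, map_zero, sub_zero]
  have hhess : fderiv ℝ (fderiv ℝ g) 0 = 0 := by
    have hfun : fderiv ℝ g = fun x => fderiv ℝ f x - Lmap Y A x := funext hgd
    rw [hfun, fderiv_fun_sub ((hf.fderiv_right (m := (⊤ : ℕ∞)) (by simp)).differentiable (by simp) 0)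
      (Lmap Y A).differentiableAt, (Lmap Y A).fderiv, hessian_eq f Y hdiag hZ, sub_self]
  obtain ⟨K, hK, r, hr, hKr⟩ := cubic_bound' hgsm hg0 hgd0 hhess
  have hn : 0 < n := (hYne.choose).pos
  set sqn := Real.sqrt n with hsqn
  have hsqn1 : (1:ℝ) ≤ sqn := by
    rw [hsqn, show (1:ℝ) = Real.sqrt 1 by rw [Real.sqrt_one]]
    exact Real.sqrt_le_sqrt (by exact_mod_cast hn)
  have hsqn0 : 0 < sqn := lt_of_lt_of_le one_pos hsqn1
  set ε := min (min r 1) (a / (4 * K * sqn)) with hε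
  have hε0 : 0 < ε := lt_min (lt_min hr one_pos) (by positivity)
  have hεr : ε ≤ r := le_trans (min_le_left _ _) (min_le_left _ _)
  have hε1 : ε ≤ 1 := le_trans (min_le_left _ _) (min_le_right _ _)
  have hεa : ε ≤ a / (4 * K * sqn) := min_le_right _ _
  set c := a / (2 * sqn) with hc
  have hc0 : 0 < c := by positivity
  set M := ‖iteratedFDeriv ℝ 2 f 0‖ with hM
  have hM0 : 0 ≤ M := norm_nonneg _
  have hAb : ∀ i, |A i| ≤ M := by
    intro i
    have := (iteratedFDeriv ℝ 2 f 0).le_opNorm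
      ![EuclideanSpace.single i 1, EuclideanSpace.single i 1]
    simpa [Fin.prod_univ_two, EuclideanSpace.norm_single] using this
  set B := 8 * K + M + 1 with hB
  have hB0 : (0:ℝ) < B := by positivity
  refine ⟨ε, hε0, B ^ ((2:ℝ)/3) / c, by positivity, ball 0 ε, ball_mem_nhds _ hε0, ?_⟩
  intro x hx hcone
  set s := Real.sqrt (∑ i ∈ Y, x i ^ 2) with hs
  have hs0 : 0 ≤ s := Real.sqrt_nonneg _
  have hsY : ∑ i ∈ Y, x i ^ 2 = s ^ 2 :=
    (Real.sq_sqrt (Finset.sum_nonneg fun i _ => sq_nonneg _)).symm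
  rw [Real.sq_sqrt (Finset.sum_nonneg fun i _ => sq_nonneg (x i))] at hcone
  have hxnorm : ‖x‖ < ε := mem_ball_zero_iff.1 hx
  have h1 : ‖x‖ = Real.sqrt (∑ i, x i ^ 2) := by
    rw [EuclideanSpace.norm_eq]
    congr 1
    exact Finset.sum_congr rfl fun i _ => by rw [Real.norm_eq_abs, sq_abs]
  have hxsq : ‖x‖ ^ 2 = ∑ i, x i ^ 2 := by
    rw [h1, Real.sq_sqrt (Finset.sum_nonneg fun i _ => sq_nonneg _)]
  have hsplit : ∑ i, x i ^ 2 = ∑ i ∈ Y, x i ^ 2 + ∑ i ∈ Yᶜ, x i ^ 2 :=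
    (Finset.sum_add_sum_compl Y _).symm
  have hsx : s ≤ ‖x‖ := by
    rw [h1]
    exact Real.sqrt_le_sqrt (Finset.sum_le_sum_of_subset_of_nonneg (Finset.subset_univ Y)
      (fun i _ _ => sq_nonneg _))
  have hsε : s < ε := lt_of_le_of_lt hsx hxnorm
  have hx2 : ‖x‖ ^ 2 ≤ 2 * ε * s := by
    rw [hxsq, hsplit, hsY]
    have h := mul_le_mul_of_nonneg_right hsε.le hs0
    have h' : s ^ 2 ≤ ε * s := by rw [pow_two]; exact h
    linarith [hcone]
  have hxball : x ∈ ball (0 : EuclideanSpace ℝ (Fin n)) r :=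
    mem_ball_zero_iff.2 (lt_of_lt_of_le hxnorm hεr)
  -- lower bound on the gradient
  obtain ⟨i₀, hi₀Y, hi₀max⟩ := Y.exists_max_image (fun i => |x i|) hYne
  have hii : s ≤ sqn * |x i₀| := by
    have h2 : ∑ i ∈ Y, x i ^ 2 ≤ (n : ℝ) * x i₀ ^ 2 := by
      calc ∑ i ∈ Y, x i ^ 2 ≤ ∑ i ∈ Y, x i₀ ^ 2 := by
            refine Finset.sum_le_sum fun i hi => ?_
            have h3 := hi₀max i hi
            calc x i ^ 2 = |x i| ^ 2 := (sq_abs _).symm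
              _ ≤ |x i₀| ^ 2 := pow_le_pow_left₀ (abs_nonneg _) h3 2
              _ = x i₀ ^ 2 := sq_abs _
        _ = (Y.card : ℝ) * x i₀ ^ 2 := by rw [Finset.sum_const, nsmul_eq_mul]
        _ ≤ (n : ℝ) * x i₀ ^ 2 := by
            have h4 : (Y.card : ℝ) ≤ (n : ℝ) := by
              exact_mod_cast le_trans (Finset.card_le_univ Y) (by simp)
            exact mul_le_mul_of_nonneg_right h4 (sq_nonneg _)
    calc s ≤ Real.sqrt ((n : ℝ) * x i₀ ^ 2) := Real.sqrt_le_sqrt h2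
      _ = sqn * |x i₀| := by rw [Real.sqrt_mul (by positivity), Real.sqrt_sq_eq_abs]
  have hxi₀ : s / sqn ≤ |x i₀| := (div_le_iff₀ hsqn0).2 (by
    rw [mul_comm] at hii ⊢
    linarith [hii])
  have hfx : fderiv ℝ f x (EuclideanSpace.single i₀ 1)
      = A i₀ * x i₀ + fderiv ℝ g x (EuclideanSpace.single i₀ 1) := by
    have h5 := hgd x
    have h6 : fderiv ℝ f x (EuclideanSpace.single i₀ 1)
        = fderiv ℝ g x (EuclideanSpace.single i₀ 1)
          + Lmap Y A x (EuclideanSpace.single i₀ 1) := by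
      rw [h5]; simp
    rw [h6, Lmap_apply]
    have h7 : ∑ i ∈ Y, A i * x i * (EuclideanSpace.single i₀ (1:ℝ)) i = A i₀ * x i₀ := by
      simp only [EuclideanSpace.single_apply, mul_ite, mul_one, mul_zero]
      rw [Finset.sum_ite_eq' Y i₀ (fun i => A i * x i)]
      simp [hi₀Y]
    rw [h7]
    ring
  have hgb : |fderiv ℝ g x (EuclideanSpace.single i₀ 1)| ≤ K * ‖x‖ ^ 2 := by
    calc |fderiv ℝ g x (EuclideanSpace.single i₀ 1)|
        = ‖fderiv ℝ g x (EuclideanSpace.single i₀ 1)‖ := (Real.norm_eq_abs _).symm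
      _ ≤ ‖fderiv ℝ g x‖ * ‖EuclideanSpace.single i₀ (1:ℝ)‖ :=
          ContinuousLinearMap.le_opNorm _ _
      _ = ‖fderiv ℝ g x‖ := by simp [EuclideanSpace.norm_single]
      _ ≤ K * ‖x‖ ^ 2 := (hKr x hxball).2
  have hgb2 : K * ‖x‖ ^ 2 ≤ a / (2 * sqn) * s := by
    calc K * ‖x‖ ^ 2 ≤ K * (2 * ε * s) := mul_le_mul_of_nonneg_left hx2 hK.le
      _ ≤ K * (2 * (a / (4 * K * sqn)) * s) := by
          refine mul_le_mul_of_nonneg_left ?_ hK.le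
          exact mul_le_mul_of_nonneg_right (by linarith [hεa]) hs0
      _ = a / (2 * sqn) * s := by
          field_simp
          ring
  have hlow : c * s ≤ |fderiv ℝ f x (EuclideanSpace.single i₀ 1)| := by
    rw [hfx]
    have h8 : a * (s / sqn) ≤ |A i₀ * x i₀| := by
      rw [abs_mul]
      exact mul_le_mul (hY i₀ hi₀Y) hxi₀ (by positivity) (abs_nonneg _)
    have h9 : |A i₀ * x i₀| ≤ |A i₀ * x i₀ + fderiv ℝ g x (EuclideanSpace.single i₀ 1)|
        + |fderiv ℝ g x (EuclideanSpace.single i₀ 1)| := by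
      have := abs_add_le (A i₀ * x i₀ + fderiv ℝ g x (EuclideanSpace.single i₀ 1))
        (-(fderiv ℝ g x (EuclideanSpace.single i₀ 1)))
      simpa using this
    have h10 : c * s = a * (s / sqn) - a / (2 * sqn) * s := by
      rw [hc]; field_simp; ring
    have h11 : |fderiv ℝ g x (EuclideanSpace.single i₀ 1)| ≤ a / (2 * sqn) * s :=
      le_trans hgb hgb2
    linarith
  have hgradnorm : ‖gradient f x‖ = ‖fderiv ℝ f x‖ := by
    unfold gradient
    exact LinearIsometryEquiv.norm_map _ _
  have hgradlow : c * s ≤ ‖gradient f x‖ := by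
    rw [hgradnorm]
    calc c * s ≤ |fderiv ℝ f x (EuclideanSpace.single i₀ 1)| := hlow
      _ = ‖fderiv ℝ f x (EuclideanSpace.single i₀ 1)‖ := (Real.norm_eq_abs _).symm
      _ ≤ ‖fderiv ℝ f x‖ * ‖EuclideanSpace.single i₀ (1:ℝ)‖ :=
          ContinuousLinearMap.le_opNorm _ _
      _ = ‖fderiv ℝ f x‖ := by simp [EuclideanSpace.norm_single]
  -- upper bound on |f x|
  set σ := Real.sqrt s with hσ
  have hσ0 : 0 ≤ σ := Real.sqrt_nonneg _
  have hσ2 : σ ^ 2 = s := Real.sq_sqrt hs0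
  have hsσ : s ≤ σ := by
    have h12 : s ^ 2 ≤ s := by
      have h := mul_le_mul_of_nonneg_right (le_trans hsε.le hε1) hs0
      rw [pow_two]; linarith
    calc s = Real.sqrt (s ^ 2) := (Real.sqrt_sq hs0).symm
      _ ≤ Real.sqrt s := Real.sqrt_le_sqrt h12
  have hQb : |Q x| ≤ M / 2 * (s * σ) := by
    calc |Q x| ≤ ∑ i ∈ Y, |A i / 2 * x i ^ 2| := Finset.abs_sum_le_sum_abs _ _
      _ = ∑ i ∈ Y, |A i| / 2 * x i ^ 2 := by
          refine Finset.sum_congr rfl fun i _ => ?_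
          rw [abs_mul, abs_div, abs_of_nonneg (sq_nonneg (x i))]
          norm_num
      _ ≤ ∑ i ∈ Y, M / 2 * x i ^ 2 := by
          refine Finset.sum_le_sum fun i _ => ?_
          exact mul_le_mul_of_nonneg_right (by linarith [hAb i]) (sq_nonneg _)
      _ = M / 2 * s ^ 2 := by rw [← Finset.mul_sum, hsY]
      _ ≤ M / 2 * (s * σ) := by
          have : s ^ 2 ≤ s * σ := by
            rw [pow_two]; exact mul_le_mul_of_nonneg_left hsσ hs0
          exact mul_le_mul_of_nonneg_left this (by positivity)
  have hgb3 : |g x| ≤ K * ‖x‖ ^ 3 := by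
    rw [← Real.norm_eq_abs]
    exact (hKr x hxball).1
  have hxu : ‖x‖ ≤ 2 * σ := by
    have h13 : ‖x‖ ^ 2 ≤ 4 * s := by
      have h := mul_le_mul_of_nonneg_right hε1 hs0
      calc ‖x‖ ^ 2 ≤ 2 * ε * s := hx2
        _ = 2 * (ε * s) := by ring
        _ ≤ 2 * (1 * s) := by linarith
        _ ≤ 4 * s := by linarith
    calc ‖x‖ = Real.sqrt (‖x‖ ^ 2) := (Real.sqrt_sq (norm_nonneg x)).symm
      _ ≤ Real.sqrt (4 * s) := Real.sqrt_le_sqrt h13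
      _ = 2 * σ := by
          rw [show (4:ℝ) * s = 2 ^ 2 * s by ring, Real.sqrt_mul (by positivity),
            Real.sqrt_sq (by norm_num)]
  have hfb : |f x| ≤ B * (s * σ) := by
    have hfgq : f x = g x + Q x := by simp [hgdef]
    rw [hfgq]
    calc |g x + Q x| ≤ |g x| + |Q x| := abs_add_le _ _
      _ ≤ K * ‖x‖ ^ 3 + M / 2 * (s * σ) := add_le_add hgb3 hQb
      _ ≤ K * (2 * σ) ^ 3 + M / 2 * (s * σ) := by
          have h14 : ‖x‖ ^ 3 ≤ (2 * σ) ^ 3 := pow_le_pow_left₀ (norm_nonneg x) hxu 3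
          exact add_le_add_left (mul_le_mul_of_nonneg_left h14 hK.le) _
      _ = 8 * K * (σ ^ 2 * σ) + M / 2 * (s * σ) := by ring
      _ = 8 * K * (s * σ) + M / 2 * (s * σ) := by rw [hσ2]
      _ = (8 * K + M / 2) * (s * σ) := by ring
      _ ≤ (8 * K + M + 1) * (s * σ) :=
          mul_le_mul_of_nonneg_right (by linarith) (mul_nonneg hs0 hσ0)
      _ = B * (s * σ) := by rw [hB]
  -- conclude
  have h5 : |f x| ^ ((2:ℝ)/3) ≤ (B * (s * σ)) ^ ((2:ℝ)/3) :=
    Real.rpow_le_rpow (abs_nonneg _) hfb (by norm_num)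
  have h6 : (B * (s * σ)) ^ ((2:ℝ)/3) = B ^ ((2:ℝ)/3) * (s * σ) ^ ((2:ℝ)/3) :=
    Real.mul_rpow hB0.le (by positivity)
  have h7 : (s * σ) ^ ((2:ℝ)/3) = s := by
    have h15 : s * σ = σ ^ (3:ℕ) := by
      rw [pow_succ, hσ2]
    rw [h15, ← Real.rpow_natCast σ 3, ← Real.rpow_mul hσ0]
    rw [show ((3:ℕ):ℝ) * ((2:ℝ)/3) = ((2:ℕ):ℝ) by norm_num, Real.rpow_natCast, hσ2]
  have h8 : s ≤ ‖gradient f x‖ / c := (le_div_iff₀ hc0).2 (by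
    rw [mul_comm] at hgradlow ⊢
    linarith [hgradlow])
  calc |f x| ^ ((2:ℝ)/3) ≤ B ^ ((2:ℝ)/3) * s := by rw [h6, h7] at h5; exact h5
    _ ≤ B ^ ((2:ℝ)/3) * (‖gradient f x‖ / c) :=
        mul_le_mul_of_nonneg_left h8 (Real.rpow_nonneg hB0.le _)
    _ = B ^ ((2:ℝ)/3) / c * ‖gradient f x‖ := by ring
end

section
/- Let f: ℝⁿ → ℝ be smooth with f(0) = 0, ∇f(0) = 0, and suppose 0 is an isolated critical point such that |∇f(x)| ≥ c·|x|² holds on a neighborhood of 0 (the first Lojasiewicz inequality with exponent 2). Write x = (y,z) with the Hessian at 0 nondegenerate in y and vanishing in z. Then in the region {|z|² ≥ ε|y|} near 0, |f(x)| ≤ C|x|³ and consequently |f(x)|^{2/3} ≤ C'·|∇f(x)|. -/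
lemma sum_single_eq (n : ℕ) (x : EuclideanSpace ℝ (Fin n)) :
    ∑ j : Fin n, x j • EuclideanSpace.single j (1:ℝ) = x := by
  ext i
  have : (∑ j : Fin n, x j • EuclideanSpace.single j (1:ℝ)) i
      = ∑ j : Fin n, (x j • EuclideanSpace.single j (1:ℝ)) i := by rw [WithLp.ofLp_sum, Finset.sum_apply]
  rw [this]
  simp [EuclideanSpace.single_apply]

open Finset in
lemma bilin_expand (n : ℕ) (B : ContinuousMultilinearMap ℝ (fun _ : Fin 2 => EuclideanSpace ℝ (Fin n)) ℝ)
    (x : EuclideanSpace ℝ (Fin n)) :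
    B (fun _ => x) = ∑ i : Fin n, ∑ j : Fin n,
      (x i * x j) * B ![EuclideanSpace.single i 1, EuclideanSpace.single j 1] := by
  have h1 : B (fun _ => x)
      = B.toMultilinearMap (fun k : Fin 2 => ∑ j : Fin n, x j • EuclideanSpace.single j (1:ℝ)) := by
    rw [sum_single_eq n x]; rfl
  rw [h1, MultilinearMap.map_sum]
  have h3 := Fintype.sum_equiv (finTwoArrowEquiv (Fin n))
    (fun r : Fin 2 → Fin n => B.toMultilinearMap fun i => x (r i) • EuclideanSpace.single (r i) (1:ℝ))
    (fun p : Fin n × Fin n => (x p.1 * x p.2) * B ![EuclideanSpace.single p.1 1, EuclideanSpace.single p.2 1]) ?_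
  · rw [h3, Fintype.sum_prod_type]
  · intro r
    have h2 : (fun i : Fin 2 => x (r i) • EuclideanSpace.single (r i) (1:ℝ))
        = fun i : Fin 2 => (fun i => x (r i)) i • (![EuclideanSpace.single (r 0) 1, EuclideanSpace.single (r 1) 1] : Fin 2 → EuclideanSpace ℝ (Fin n)) i := by
      funext i; fin_cases i <;> rfl
    simp only []
    rw [h2, B.toMultilinearMap.map_smul_univ]
    simp [finTwoArrowEquiv, Fin.prod_univ_two, smul_eq_mul]

open Finset in
lemma bilin_diag_bound (n : ℕ) (Y : Finset (Fin n))
    (B : ContinuousMultilinearMap ℝ (fun _ : Fin 2 => EuclideanSpace ℝ (Fin n)) ℝ)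
    (hdiag : ∀ i j : Fin n, i ≠ j → B ![EuclideanSpace.single i 1, EuclideanSpace.single j 1] = 0)
    (hZ : ∀ i ∉ Y, B ![EuclideanSpace.single i 1, EuclideanSpace.single i 1] = 0)
    (x : EuclideanSpace ℝ (Fin n)) :
    |B (fun _ => x)| ≤ ‖B‖ * ∑ i ∈ Y, x i ^ 2 := by
  rw [bilin_expand]
  have h1 : ∀ i : Fin n, ∑ j : Fin n,
      (x i * x j) * B ![EuclideanSpace.single i 1, EuclideanSpace.single j 1]
      = (x i ^ 2) * B ![EuclideanSpace.single i 1, EuclideanSpace.single i 1] := by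
    intro i
    rw [Finset.sum_eq_single i]
    · ring_nf
    · intro j _ hj; rw [hdiag i j (Ne.symm hj)]; ring
    · intro h; exact absurd (Finset.mem_univ i) h
  simp only [h1]
  rw [← Finset.sum_subset (Finset.subset_univ Y) (fun i _ hi => by rw [hZ i hi]; ring)]
  calc |∑ i ∈ Y, x i ^ 2 * B ![EuclideanSpace.single i 1, EuclideanSpace.single i 1]|
      ≤ ∑ i ∈ Y, |x i ^ 2 * B ![EuclideanSpace.single i 1, EuclideanSpace.single i 1]| :=
        Finset.abs_sum_le_sum_abs _ _
    _ ≤ ∑ i ∈ Y, ‖B‖ * x i ^ 2 := by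
        refine Finset.sum_le_sum fun i _ => ?_
        rw [abs_mul, abs_pow, sq_abs]
        have hb : |B ![EuclideanSpace.single i 1, EuclideanSpace.single i 1]| ≤ ‖B‖ := by
          have := B.le_opNorm ![EuclideanSpace.single i 1, EuclideanSpace.single i 1]
          simpa [Fin.prod_univ_two, EuclideanSpace.norm_single] using this
        calc x i ^ 2 * |B ![EuclideanSpace.single i 1, EuclideanSpace.single i 1]|
            ≤ x i ^ 2 * ‖B‖ := by
              exact mul_le_mul_of_nonneg_left hb (sq_nonneg _)
          _ = ‖B‖ * x i ^ 2 := by ring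
    _ = ‖B‖ * ∑ i ∈ Y, x i ^ 2 := by rw [Finset.mul_sum]

open Set in
lemma taylor_quad (n : ℕ) (f : EuclideanSpace ℝ (Fin n) → ℝ) (hf : ContDiff ℝ (⊤ : ℕ∞) f)
    (hf0 : f 0 = 0) (hfd : fderiv ℝ f 0 = 0) (M : ℝ)
    (hM : ∀ w ∈ Metric.closedBall (0 : EuclideanSpace ℝ (Fin n)) 1, ‖iteratedFDeriv ℝ 3 f w‖ ≤ M)
    (x : EuclideanSpace ℝ (Fin n)) (hx : ‖x‖ ≤ 1) :
    |f x - 2⁻¹ * (iteratedFDeriv ℝ 2 f 0 (fun _ => x))| ≤ M * ‖x‖ ^ 3 / 2 := by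
  set L : ℝ →L[ℝ] EuclideanSpace ℝ (Fin n) := (1 : ℝ →L[ℝ] ℝ).smulRight x with hL
  have hLt : ∀ t : ℝ, L t = t • x := fun t => by
    simp [hL, ContinuousLinearMap.smulRight_apply]
  set g : ℝ → ℝ := f ∘ L with hg
  have hgt : ∀ t : ℝ, g t = f (t • x) := fun t => by rw [hg, Function.comp_apply, hLt]
  have hgc : ContDiff ℝ (⊤ : ℕ∞) g := hf.comp L.contDiff
  -- iterated derivatives of g
  have hit : ∀ (m : ℕ) (t : ℝ), iteratedDeriv m g t = iteratedFDeriv ℝ m f (t • x) (fun _ => x) := by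
    intro m t
    rw [iteratedDeriv_eq_iteratedFDeriv, hg,
      L.iteratedFDeriv_comp_right hf t (WithTop.coe_le_coe.mpr le_top)]
    simp only [ContinuousMultilinearMap.compContinuousLinearMap_apply, hLt, one_smul]
  have huD : UniqueDiffOn ℝ (Icc (0:ℝ) 1) := uniqueDiffOn_Icc one_pos
  have hw : ∀ (m : ℕ), ∀ y ∈ Icc (0:ℝ) 1,
      iteratedDerivWithin m g (Icc 0 1) y = iteratedDeriv m g y := by
    intro m y hy
    have hgtop : ContDiff ℝ ((⊤ : ℕ∞) : WithTop ℕ∞) g := hgc.of_le (by simp)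
    have hs := (hasFTaylorSeriesUpToOn_univ_iff.mpr
      (contDiff_iff_ftaylorSeries.mp hgtop)).mono (subset_univ (Icc (0:ℝ) 1))
    have h := (hs.eq_iteratedFDerivWithin_of_uniqueDiffOn (m := m) (by exact_mod_cast le_top) huD hy).symm
    rw [iteratedDerivWithin_eq_iteratedFDerivWithin, iteratedDeriv_eq_iteratedFDeriv, h]
    rfl
  -- Taylor polynomial value
  have hP : taylorWithinEval g 2 (Icc 0 1) 0 1
      = 2⁻¹ * (iteratedFDeriv ℝ 2 f 0 (fun _ => x)) := by
    rw [taylorWithinEval_succ, taylorWithinEval_succ, taylor_within_zero_eval]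
    rw [hw 1 0 (by norm_num), hw 2 0 (by norm_num), hit 1 0, hit 2 0]
    rw [iteratedFDeriv_one_apply]
    simp [hgt, hfd, hf0, smul_eq_mul]
    norm_num
  have hC : ∀ y ∈ Icc (0:ℝ) 1,
      ‖iteratedDerivWithin 3 g (Icc 0 1) y‖ ≤ M * ‖x‖ ^ 3 := by
    intro y hy
    rw [hw 3 y hy, hit 3 y]
    have h1 : ‖iteratedFDeriv ℝ 3 f (y • x) (fun _ => x)‖
        ≤ ‖iteratedFDeriv ℝ 3 f (y • x)‖ * ∏ _i : Fin 3, ‖x‖ :=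
      (iteratedFDeriv ℝ 3 f (y • x)).le_opNorm _
    have h2 : y • x ∈ Metric.closedBall (0 : EuclideanSpace ℝ (Fin n)) 1 := by
      rw [Metric.mem_closedBall, dist_zero_right, norm_smul]
      calc ‖y‖ * ‖x‖ ≤ 1 * 1 := by
            apply mul_le_mul _ hx (norm_nonneg _) zero_le_one
            rw [Real.norm_eq_abs, abs_le]; exact ⟨by linarith [hy.1], hy.2⟩
        _ = 1 := by norm_num
    calc ‖iteratedFDeriv ℝ 3 f (y • x) (fun _ => x)‖
        ≤ ‖iteratedFDeriv ℝ 3 f (y • x)‖ * ∏ _i : Fin 3, ‖x‖ := h1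
      _ ≤ M * ‖x‖ ^ 3 := by
          rw [Finset.prod_const]
          simp only [Finset.card_univ, Fintype.card_fin]
          exact mul_le_mul_of_nonneg_right (hM _ h2) (by positivity)
  have := taylor_mean_remainder_bound (f := g) (a := 0) (b := 1) (x := 1) (n := 2)
    zero_le_one ((hgc.of_le (WithTop.coe_le_coe.mpr le_top)).contDiffOn) (by norm_num) hC
  rw [hP] at this
  have hg1 : g 1 = f x := by rw [hgt, one_smul]
  rw [hg1] at this
  calc |f x - 2⁻¹ * (iteratedFDeriv ℝ 2 f 0 (fun _ => x))|
      ≤ M * ‖x‖ ^ 3 * (1 - 0) ^ (2 + 1) / Nat.factorial 2 := by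
        simpa using this
    _ = M * ‖x‖ ^ 3 / 2 := by norm_num [Nat.factorial]

/-- Let `f : ℝⁿ → ℝ` be smooth with `f(0) = 0`, `∇f(0) = 0`, and suppose `0` is an isolated
critical point such that the first Lojasiewicz inequality `|∇f(x)| ≥ c·|x|²` holds on a
neighborhood of `0`.  Write `x = (y, z)` (the `y`-coordinates indexed by `Y`), the Hessian at
`0` being diagonal, nondegenerate in `y` and vanishing in `z`.  Then there are constants
`C, C' > 0` and a neighborhood `U` of `0` so that in the region `{|z|² ≥ ε·|y|}` one has
`|f(x)| ≤ C·|x|³` and consequently `|f(x)|^{2/3} ≤ C'·|∇f(x)|`. -/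
theorem stmt_7 (n : ℕ) (f : EuclideanSpace ℝ (Fin n) → ℝ) (Y : Finset (Fin n)) (a c ε : ℝ)
    (hf : ContDiff ℝ (⊤ : ℕ∞) f) (hf0 : f 0 = 0) (hgrad0 : gradient f 0 = 0)
    (ha : 0 < a) (hc : 0 < c) (hε : 0 < ε)
    (hdiag : ∀ i j : Fin n, i ≠ j →
      iteratedFDeriv ℝ 2 f 0 ![EuclideanSpace.single i 1, EuclideanSpace.single j 1] = 0)
    (hY : ∀ i ∈ Y, a ≤
      |iteratedFDeriv ℝ 2 f 0 ![EuclideanSpace.single i 1, EuclideanSpace.single i 1]|)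
    (hZ : ∀ i ∉ Y,
      iteratedFDeriv ℝ 2 f 0 ![EuclideanSpace.single i 1, EuclideanSpace.single i 1] = 0)
    (U₀ : Set (EuclideanSpace ℝ (Fin n))) (hU₀ : U₀ ∈ nhds 0)
    (hLoj : ∀ x ∈ U₀, c * ‖x‖ ^ 2 ≤ ‖gradient f x‖) :
    ∃ C > (0 : ℝ), ∃ C' > (0 : ℝ), ∃ U ∈ nhds (0 : EuclideanSpace ℝ (Fin n)),
      ∀ x ∈ U,
        ε * Real.sqrt (∑ i ∈ Y, x i ^ 2) ≤ Real.sqrt (∑ i ∈ Yᶜ, x i ^ 2) ^ 2 →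
        |f x| ≤ C * ‖x‖ ^ 3 ∧ |f x| ^ ((2 : ℝ) / 3) ≤ C' * ‖gradient f x‖ := by
  set B := iteratedFDeriv ℝ 2 f 0 with hB
  -- the derivative vanishes at 0
  have hfd : fderiv ℝ f 0 = 0 := by
    have h1 : HasGradientAt f (0 : EuclideanSpace ℝ (Fin n)) 0 := by
      have := ((hf.differentiable (by simp)) 0).hasGradientAt
      rwa [hgrad0] at this
    have h2 := hasGradientAt_iff_hasFDerivAt.mp h1
    simpa using h2.fderiv
  -- bound for the third derivative on the unit ball
  have hcont : Continuous (iteratedFDeriv ℝ 3 f) :=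
    hf.continuous_iteratedFDeriv (WithTop.coe_le_coe.mpr le_top)
  obtain ⟨M, hM⟩ := (isCompact_closedBall (0:EuclideanSpace ℝ (Fin n)) 1).exists_bound_of_continuousOn
    hcont.continuousOn
  set M₀ := max M 0 with hM₀
  have hM₀nn : 0 ≤ M₀ := le_max_right _ _
  have hM' : ∀ w ∈ Metric.closedBall (0:EuclideanSpace ℝ (Fin n)) 1, ‖iteratedFDeriv ℝ 3 f w‖ ≤ M₀ :=
    fun w hw => le_trans (hM w hw) (le_max_left _ _)
  set C : ℝ := M₀ / 2 + ‖B‖ / (2 * ε ^ 2) + 1 with hC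
  have hCpos : 0 < C := by
    have : 0 ≤ ‖B‖ / (2 * ε ^ 2) := by positivity
    simp only [hC]; linarith
  refine ⟨C, hCpos, C ^ ((2:ℝ)/3) / c, by positivity,
    Metric.ball 0 1 ∩ U₀, Filter.inter_mem (Metric.ball_mem_nhds 0 one_pos) hU₀, ?_⟩
  rintro x ⟨hx1, hxU₀⟩ hreg
  rw [Metric.mem_ball, dist_zero_right] at hx1
  have hxle : ‖x‖ ≤ 1 := hx1.le
  -- notation
  set S := ∑ i ∈ Y, x i ^ 2 with hS
  set T := ∑ i ∈ Yᶜ, x i ^ 2 with hT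
  have hS0 : 0 ≤ S := Finset.sum_nonneg fun i _ => sq_nonneg _
  have hT0 : 0 ≤ T := Finset.sum_nonneg fun i _ => sq_nonneg _
  have hnormsq : ‖x‖ ^ 2 = ∑ i : Fin n, x i ^ 2 := by
    rw [EuclideanSpace.norm_eq, Real.sq_sqrt (Finset.sum_nonneg fun i _ => sq_nonneg _)]
    simp [Real.norm_eq_abs, sq_abs]
  have hTx : T ≤ ‖x‖ ^ 2 := by
    rw [hnormsq, hT]
    exact Finset.sum_le_sum_of_subset_of_nonneg (Finset.subset_univ _)
      (fun i _ _ => sq_nonneg _)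
  -- region estimate : S ≤ ε⁻² ‖x‖³
  have hSx : S ≤ ε⁻¹ ^ 2 * ‖x‖ ^ 3 := by
    rw [Real.sq_sqrt hT0] at hreg
    have h1 : Real.sqrt S ≤ T / ε := by
      rw [le_div_iff₀ hε]; linarith [hreg]
    have h2 : S ≤ (T / ε) ^ 2 := by
      calc S = Real.sqrt S ^ 2 := (Real.sq_sqrt hS0).symm
        _ ≤ (T / ε) ^ 2 := by gcongr
    have h3 : (T / ε) ^ 2 ≤ (‖x‖ ^ 2 / ε) ^ 2 := by gcongr
    have h4 : (‖x‖ ^ 2 / ε) ^ 2 = ε⁻¹ ^ 2 * (‖x‖ ^ 3 * ‖x‖) := by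
      field_simp
    have h5 : ε⁻¹ ^ 2 * (‖x‖ ^ 3 * ‖x‖) ≤ ε⁻¹ ^ 2 * (‖x‖ ^ 3 * 1) := by
      gcongr
    have h6 : ε⁻¹ ^ 2 * (‖x‖ ^ 3 * 1) = ε⁻¹ ^ 2 * ‖x‖ ^ 3 := by ring
    linarith
  -- Taylor and Hessian bounds
  have htay := taylor_quad n f hf hf0 hfd M₀ hM' x hxle
  have hquad : |B (fun _ => x)| ≤ ‖B‖ * S := bilin_diag_bound n Y B hdiag hZ x
  have hmain : |f x| ≤ C * ‖x‖ ^ 3 := by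
    have h6 : |f x| ≤ |f x - 2⁻¹ * B (fun _ => x)| + 2⁻¹ * |B (fun _ => x)| := by
      have := abs_sub_abs_le_abs_sub (f x) (2⁻¹ * B (fun _ => x))
      have h7 : |2⁻¹ * B (fun _ => x)| = 2⁻¹ * |B (fun _ => x)| := by
        rw [abs_mul]; norm_num
      linarith [abs_sub_abs_le_abs_sub (f x) (2⁻¹ * B (fun _ => x)), abs_abs (f x)]
    have h8 : ‖B‖ * S ≤ ‖B‖ * (ε⁻¹ ^ 2 * ‖x‖ ^ 3) := by
      gcongr
    have h9 : ‖B‖ * (ε⁻¹ ^ 2 * ‖x‖ ^ 3) = (‖B‖ / ε ^ 2) * ‖x‖ ^ 3 := by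
      field_simp
    have hBnn : (0:ℝ) ≤ ‖B‖ := norm_nonneg _
    have hx3 : (0:ℝ) ≤ ‖x‖ ^ 3 := by positivity
    calc |f x| ≤ |f x - 2⁻¹ * B (fun _ => x)| + 2⁻¹ * |B (fun _ => x)| := h6
      _ ≤ M₀ * ‖x‖ ^ 3 / 2 + 2⁻¹ * (‖B‖ * (ε⁻¹ ^ 2 * ‖x‖ ^ 3)) := by
          have := le_trans hquad h8
          linarith [htay]
      _ = (M₀ / 2 + ‖B‖ / (2 * ε ^ 2)) * ‖x‖ ^ 3 := by field_simp
      _ ≤ C * ‖x‖ ^ 3 := by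
          apply mul_le_mul_of_nonneg_right _ hx3
          simp only [hC]; linarith
  refine ⟨hmain, ?_⟩
  -- second inequality
  have h10 : |f x| ^ ((2:ℝ)/3) ≤ (C * ‖x‖ ^ 3) ^ ((2:ℝ)/3) :=
    Real.rpow_le_rpow (abs_nonneg _) hmain (by norm_num)
  have h11 : (C * ‖x‖ ^ 3) ^ ((2:ℝ)/3) = C ^ ((2:ℝ)/3) * ‖x‖ ^ 2 := by
    rw [Real.mul_rpow hCpos.le (by positivity)]
    congr 1
    rw [← Real.rpow_natCast ‖x‖ 3, ← Real.rpow_mul (norm_nonneg x),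
      ← Real.rpow_natCast ‖x‖ 2]
    norm_num
  have h12 : C ^ ((2:ℝ)/3) * ‖x‖ ^ 2 = (C ^ ((2:ℝ)/3) / c) * (c * ‖x‖ ^ 2) := by
    field_simp
  have h13 : (C ^ ((2:ℝ)/3) / c) * (c * ‖x‖ ^ 2) ≤ (C ^ ((2:ℝ)/3) / c) * ‖gradient f x‖ := by
    apply mul_le_mul_of_nonneg_left (hLoj x hxU₀) (by positivity)
  calc |f x| ^ ((2:ℝ)/3) ≤ (C * ‖x‖ ^ 3) ^ ((2:ℝ)/3) := h10
    _ = C ^ ((2:ℝ)/3) * ‖x‖ ^ 2 := h11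
    _ = (C ^ ((2:ℝ)/3) / c) * (c * ‖x‖ ^ 2) := h12
    _ ≤ (C ^ ((2:ℝ)/3) / c) * ‖gradient f x‖ := h13
end

section
/- Gaussian Poincaré inequality on the cylinder: there exists C = C(k,n) such that for Σ = S^k_{√(2k)} × ℝ^{n-k} ⊂ ℝ^{n+1} and any u ∈ W^{1,2} (Gaussian Sobolev space), ∫_Σ |x|²u² e^{-|x|²/4} ≤ C (∫_Σ u² e^{-|x|²/4} + ∫_Σ |∇_{ℝ^{n-k}} u|² e^{-|x|²/4}), where ∇_{ℝ^{n-k}} denotes the gradient in the Euclidean factor directions only. -/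
/-!
With `w(y) = exp (-(b + |y|²)/4)` one has `∂ᵥ w = -⟪v, y⟫ w / 2`, so integrating by parts
`∫ ⟪v, y⟫ ∂ᵥ(u² w) = -∫ ‖v‖² u² w` over the Euclidean factor gives
`½ ∫ ⟪v, y⟫² u² w = ‖v‖² ∫ u² w + 2 ∫ ⟪v, y⟫ u ∂ᵥu w`.
Absorbing the cross term with `2ab ≤ a²/4 + 4b²` yields
`∫ ⟪v, y⟫² u² w ≤ 4 ‖v‖² ∫ u² w + 16 ∫ (∂ᵥu)² w`, and summing over an orthonormal basis
`∫ |y|² u² w ≤ 4 (n - k) ∫ u² w + 16 ∫ |∇u|² w`.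
Fubini over the sphere factor and `|x|² = 2k + |y|²` on `Σ` give the theorem.
-/

open MeasureTheory Real
open scoped RealInnerProductSpace

section InnerProductSpace

variable {E : Type*} [NormedAddCommGroup E] [InnerProductSpace ℝ E]

theorem hasFDerivAt_sq_mul_gaussian {u : E → ℝ} {u' : E →L[ℝ] ℝ} {y : E}
    (hu : HasFDerivAt u u' y) (b : ℝ) :
    HasFDerivAt (fun y => u y ^ 2 * exp (-(b + ‖y‖ ^ 2) / 4))
      ((2 * u y * exp (-(b + ‖y‖ ^ 2) / 4)) • u' -
        (u y ^ 2 * exp (-(b + ‖y‖ ^ 2) / 4) / 2) • innerSL ℝ y) y := by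
  have hq := ((hasStrictFDerivAt_norm_sq y).hasFDerivAt.const_add b).const_mul (-1 / 4 : ℝ)
  have hfun : (fun y : E => -1 / 4 * (b + ‖y‖ ^ 2)) = fun y => -(b + ‖y‖ ^ 2) / 4 := by
    ext; ring
  rw [hfun] at hq
  refine ((hu.pow 2).mul hq.exp).congr_fderiv ?_
  ext z
  simp only [Nat.add_one_sub_one, pow_one, nsmul_eq_mul, Nat.cast_ofNat, add_apply, smul_apply,
    coe_innerSL_apply, smul_eq_mul, sub_apply]
  ring

theorem OrthonormalBasis.inner_sq_le_norm_sq {ι : Type*} [Fintype ι]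
    (e : OrthonormalBasis ι ℝ E) (i : ι) (x : E) : ⟪e i, x⟫ ^ 2 ≤ ‖x‖ ^ 2 :=
  e.sum_sq_inner_right x ▸
    Finset.single_le_sum (f := fun j => ⟪e j, x⟫ ^ 2) (fun _ _ => sq_nonneg _) (Finset.mem_univ i)

end InnerProductSpace

section Gaussian

variable {E : Type*} [NormedAddCommGroup E] [InnerProductSpace ℝ E] [FiniteDimensional ℝ E]
  [MeasurableSpace E] [BorelSpace E] {μ : Measure E} [μ.IsAddHaarMeasure]

theorem integral_inner_sq_mul_sq_gaussian_eq {u : E → ℝ} (hu : Differentiable ℝ u) (b : ℝ) (v : E)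
    (h0 : Integrable (fun y => u y ^ 2 * exp (-(b + ‖y‖ ^ 2) / 4)) μ)
    (h1 : Integrable (fun y => ⟪v, y⟫ ^ 2 * u y ^ 2 * exp (-(b + ‖y‖ ^ 2) / 4)) μ)
    (h2 : Integrable (fun y => ⟪v, y⟫ * u y * fderiv ℝ u y v * exp (-(b + ‖y‖ ^ 2) / 4)) μ) :
    (∫ y, ⟪v, y⟫ ^ 2 * u y ^ 2 * exp (-(b + ‖y‖ ^ 2) / 4) ∂μ) / 2 =
      ‖v‖ ^ 2 * (∫ y, u y ^ 2 * exp (-(b + ‖y‖ ^ 2) / 4) ∂μ) +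
        2 * ∫ y, ⟪v, y⟫ * u y * fderiv ℝ u y v * exp (-(b + ‖y‖ ^ 2) / 4) ∂μ := by
  have hderiv (y : E) :
      ⟪v, y⟫ * ((2 * u y * exp (-(b + ‖y‖ ^ 2) / 4)) • fderiv ℝ u y -
        (u y ^ 2 * exp (-(b + ‖y‖ ^ 2) / 4) / 2) • innerSL ℝ y) v =
      2 * (⟪v, y⟫ * u y * fderiv ℝ u y v * exp (-(b + ‖y‖ ^ 2) / 4)) -
        ⟪v, y⟫ ^ 2 * u y ^ 2 * exp (-(b + ‖y‖ ^ 2) / 4) / 2 := by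
    simp only [sub_apply, smul_apply, innerSL_apply_apply, smul_eq_mul, real_inner_comm y v]
    ring
  have hfg : Integrable (fun y => ⟪v, y⟫ * (u y ^ 2 * exp (-(b + ‖y‖ ^ 2) / 4))) μ := by
    refine (h0.add h1).mono' (by have := hu.continuous; fun_prop) (ae_of_all _ fun y => ?_)
    have hw : 0 ≤ u y ^ 2 * exp (-(b + ‖y‖ ^ 2) / 4) := by positivity
    have habs : |⟪v, y⟫| ≤ 1 + ⟪v, y⟫ ^ 2 := by
      nlinarith [sq_abs ⟪v, y⟫, sq_nonneg (|⟪v, y⟫| - 1)]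
    rw [norm_mul, Real.norm_of_nonneg hw, Real.norm_eq_abs, Pi.add_apply]
    nlinarith [mul_le_mul_of_nonneg_right habs hw]
  have key := integral_bilinear_hasFDerivAt_right_eq_neg_left_of_integrable
    (B := ContinuousLinearMap.mul ℝ ℝ) (v := v) (μ := μ)
    (by simpa using h0.const_mul ⟪v, v⟫)
    (by simp only [ContinuousLinearMap.mul_apply', hderiv]
        exact (h2.const_mul 2).sub (h1.div_const 2))
    hfg (fun y _ => (innerSL ℝ v).hasFDerivAt)
    (fun y _ => hasFDerivAt_sq_mul_gaussian (hu y).hasFDerivAt b)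
  simp only [ContinuousLinearMap.mul_apply', hderiv, innerSL_apply_apply] at key
  rw [integral_sub (h2.const_mul 2) (h1.div_const 2), integral_const_mul, integral_div,
    integral_const_mul, real_inner_self_eq_norm_sq] at key
  linarith

theorem integral_inner_sq_mul_sq_gaussian_le {u : E → ℝ} (hu : Differentiable ℝ u) (b : ℝ)
    (v : E) (h0 : Integrable (fun y => u y ^ 2 * exp (-(b + ‖y‖ ^ 2) / 4)) μ)
    (h1 : Integrable (fun y => ⟪v, y⟫ ^ 2 * u y ^ 2 * exp (-(b + ‖y‖ ^ 2) / 4)) μ)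
    (hd : Integrable (fun y => fderiv ℝ u y v ^ 2 * exp (-(b + ‖y‖ ^ 2) / 4)) μ) :
    ∫ y, ⟪v, y⟫ ^ 2 * u y ^ 2 * exp (-(b + ‖y‖ ^ 2) / 4) ∂μ ≤
      4 * ‖v‖ ^ 2 * (∫ y, u y ^ 2 * exp (-(b + ‖y‖ ^ 2) / 4) ∂μ) +
        16 * ∫ y, fderiv ℝ u y v ^ 2 * exp (-(b + ‖y‖ ^ 2) / 4) ∂μ := by
  have hcross (y : E) :
      |⟪v, y⟫ * u y * fderiv ℝ u y v * exp (-(b + ‖y‖ ^ 2) / 4)| ≤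
        ⟪v, y⟫ ^ 2 * u y ^ 2 * exp (-(b + ‖y‖ ^ 2) / 4) / 8 +
          2 * (fderiv ℝ u y v ^ 2 * exp (-(b + ‖y‖ ^ 2) / 4)) := by
    have hw := exp_pos (-(b + ‖y‖ ^ 2) / 4)
    -- `2|ad| ≤ a²/4 + 4d²` with `a = ⟪v, y⟫ u y` and `d = ∂ᵥu y`
    have hamgm : |⟪v, y⟫ * u y * fderiv ℝ u y v| ≤
        (⟪v, y⟫ * u y) ^ 2 / 8 + 2 * fderiv ℝ u y v ^ 2 := by
      rw [abs_le]
      constructor <;> nlinarith [sq_nonneg (⟪v, y⟫ * u y / 4 - fderiv ℝ u y v),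
        sq_nonneg (⟪v, y⟫ * u y / 4 + fderiv ℝ u y v)]
    rw [abs_mul, abs_of_pos hw]
    nlinarith [mul_le_mul_of_nonneg_right hamgm hw.le]
  have hbound : Integrable (fun y => ⟪v, y⟫ ^ 2 * u y ^ 2 * exp (-(b + ‖y‖ ^ 2) / 4) / 8 +
      2 * (fderiv ℝ u y v ^ 2 * exp (-(b + ‖y‖ ^ 2) / 4))) μ :=
    (h1.div_const 8).add (hd.const_mul 2)
  have h2 : Integrable (fun y => ⟪v, y⟫ * u y * fderiv ℝ u y v * exp (-(b + ‖y‖ ^ 2) / 4)) μ :=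
    hbound.mono' (by have := hu.continuous; have := measurable_fderiv_apply_const ℝ u v; fun_prop)
      (ae_of_all _ hcross)
  have hX := integral_mono h2 hbound fun y => (le_abs_self _).trans (hcross y)
  rw [integral_add (h1.div_const 8) (hd.const_mul 2), integral_div, integral_const_mul] at hX
  linarith [integral_inner_sq_mul_sq_gaussian_eq hu b v h0 h1 h2]

theorem integral_norm_sq_mul_sq_gaussian_le {u : E → ℝ} (hu : Differentiable ℝ u) (b : ℝ)
    (h0 : Integrable (fun y => u y ^ 2 * exp (-(b + ‖y‖ ^ 2) / 4)) μ)
    (h1 : Integrable (fun y => ‖y‖ ^ 2 * u y ^ 2 * exp (-(b + ‖y‖ ^ 2) / 4)) μ)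
    (hd : Integrable (fun y => ‖gradient u y‖ ^ 2 * exp (-(b + ‖y‖ ^ 2) / 4)) μ) :
    ∫ y, ‖y‖ ^ 2 * u y ^ 2 * exp (-(b + ‖y‖ ^ 2) / 4) ∂μ ≤
      4 * Module.finrank ℝ E * (∫ y, u y ^ 2 * exp (-(b + ‖y‖ ^ 2) / 4) ∂μ) +
        16 * ∫ y, ‖gradient u y‖ ^ 2 * exp (-(b + ‖y‖ ^ 2) / 4) ∂μ := by
  let e := stdOrthonormalBasis ℝ E
  have hu_cont := hu.continuous
  have hfderiv (y : E) (i) : fderiv ℝ u y (e i) = ⟪e i, gradient u y⟫ := by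
    rw [real_inner_comm, inner_gradient_left]
  have h1i (i) : Integrable (fun y => ⟪e i, y⟫ ^ 2 * u y ^ 2 * exp (-(b + ‖y‖ ^ 2) / 4)) μ := by
    refine h1.mono' (by fun_prop) (ae_of_all _ fun y => ?_)
    rw [Real.norm_of_nonneg (by positivity)]
    exact mul_le_mul_of_nonneg_right
      (mul_le_mul_of_nonneg_right (e.inner_sq_le_norm_sq i y) (sq_nonneg _)) (exp_pos _).le
  have hdi (i) : Integrable (fun y => fderiv ℝ u y (e i) ^ 2 * exp (-(b + ‖y‖ ^ 2) / 4)) μ := by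
    refine hd.mono' (by have := measurable_fderiv_apply_const ℝ u (e i); fun_prop)
      (ae_of_all _ fun y => ?_)
    rw [Real.norm_of_nonneg (by positivity), hfderiv]
    exact mul_le_mul_of_nonneg_right (e.inner_sq_le_norm_sq i _) (exp_pos _).le
  calc ∫ y, ‖y‖ ^ 2 * u y ^ 2 * exp (-(b + ‖y‖ ^ 2) / 4) ∂μ
      = ∑ i, ∫ y, ⟪e i, y⟫ ^ 2 * u y ^ 2 * exp (-(b + ‖y‖ ^ 2) / 4) ∂μ := by
        rw [← integral_finsetSum _ fun i _ => h1i i]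
        simp only [← Finset.sum_mul, e.sum_sq_inner_right]
    _ ≤ ∑ i, (4 * (∫ y, u y ^ 2 * exp (-(b + ‖y‖ ^ 2) / 4) ∂μ) +
          16 * ∫ y, fderiv ℝ u y (e i) ^ 2 * exp (-(b + ‖y‖ ^ 2) / 4) ∂μ) := by
        gcongr with i
        simpa using integral_inner_sq_mul_sq_gaussian_le hu b (e i) h0 (h1i i) (hdi i)
    _ = 4 * Module.finrank ℝ E * (∫ y, u y ^ 2 * exp (-(b + ‖y‖ ^ 2) / 4) ∂μ) +
          16 * ∫ y, ∑ i, fderiv ℝ u y (e i) ^ 2 * exp (-(b + ‖y‖ ^ 2) / 4) ∂μ := by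
        rw [Finset.sum_add_distrib, Finset.sum_const, ← Finset.mul_sum,
          integral_finsetSum _ fun i _ => hdi i]
        simp only [Finset.card_univ, Fintype.card_fin, nsmul_eq_mul]
        ring
    _ = _ := by simp only [← Finset.sum_mul, hfderiv, e.sum_sq_inner_right]

theorem integral_prod_norm_sq_mul_sq_gaussian_le {Θ : Type*} [MeasurableSpace Θ]
    (ν : Measure Θ) [SFinite ν] {u : Θ × E → ℝ} (hu : ∀ θ, Differentiable ℝ fun y => u (θ, y))
    (b : ℝ) (h0 : Integrable (fun p => u p ^ 2 * exp (-(b + ‖p.2‖ ^ 2) / 4)) (ν.prod μ))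
    (h1 : Integrable (fun p => ‖p.2‖ ^ 2 * u p ^ 2 * exp (-(b + ‖p.2‖ ^ 2) / 4)) (ν.prod μ))
    (hd : Integrable (fun p => ‖gradient (fun y => u (p.1, y)) p.2‖ ^ 2 *
      exp (-(b + ‖p.2‖ ^ 2) / 4)) (ν.prod μ)) :
    ∫ p, ‖p.2‖ ^ 2 * u p ^ 2 * exp (-(b + ‖p.2‖ ^ 2) / 4) ∂(ν.prod μ) ≤
      4 * Module.finrank ℝ E * (∫ p, u p ^ 2 * exp (-(b + ‖p.2‖ ^ 2) / 4) ∂(ν.prod μ)) +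
        16 * ∫ p, ‖gradient (fun y => u (p.1, y)) p.2‖ ^ 2 *
          exp (-(b + ‖p.2‖ ^ 2) / 4) ∂(ν.prod μ) := by
  rw [integral_prod _ h0, integral_prod _ h1, integral_prod _ hd, ← integral_const_mul,
    ← integral_const_mul, ← integral_add (h0.integral_prod_left.const_mul _)
      (hd.integral_prod_left.const_mul _)]
  refine integral_mono_ae h1.integral_prod_left
    ((h0.integral_prod_left.const_mul _).add (hd.integral_prod_left.const_mul _)) ?_
  filter_upwards [h0.prod_right_ae, h1.prod_right_ae, hd.prod_right_ae] with θ h0θ h1θ hdθ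
  exact integral_norm_sq_mul_sq_gaussian_le (hu θ) b h0θ h1θ hdθ

end Gaussian

/-- `Σ` is parametrized by `(θ, y) ∈ S^k × ℝ^{n-k}` via `(√(2k) θ, y)`, so `|x|² = 2k + |y|²`;
the product of `volume.toSphere` and Lebesgue measure is the surface measure of `Σ` up to a
factor depending only on `k`, which is absorbed in `C`. -/
theorem stmt_9_general (k n : ℕ) :
    ∃ C : ℝ, 0 < C ∧
      ∀ u : (Metric.sphere (0 : EuclideanSpace ℝ (Fin (k + 1))) 1 ×
          EuclideanSpace ℝ (Fin (n - k))) → ℝ,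
        (∀ θ, Differentiable ℝ (fun y => u (θ, y))) →
        Integrable (fun p => u p ^ 2 * Real.exp (-(2 * k + ‖p.2‖ ^ 2) / 4))
          (((volume : Measure (EuclideanSpace ℝ (Fin (k + 1)))).toSphere).prod volume) →
        Integrable
          (fun p => ‖gradient (fun y => u (p.1, y)) p.2‖ ^ 2 *
            Real.exp (-(2 * k + ‖p.2‖ ^ 2) / 4))
          (((volume : Measure (EuclideanSpace ℝ (Fin (k + 1)))).toSphere).prod volume) →
        (∫ p, (2 * k + ‖p.2‖ ^ 2) * u p ^ 2 * Real.exp (-(2 * k + ‖p.2‖ ^ 2) / 4)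
            ∂(((volume : Measure (EuclideanSpace ℝ (Fin (k + 1)))).toSphere).prod volume)) ≤
          C * ((∫ p, u p ^ 2 * Real.exp (-(2 * k + ‖p.2‖ ^ 2) / 4)
              ∂(((volume : Measure (EuclideanSpace ℝ (Fin (k + 1)))).toSphere).prod volume)) +
            (∫ p, ‖gradient (fun y => u (p.1, y)) p.2‖ ^ 2 *
              Real.exp (-(2 * k + ‖p.2‖ ^ 2) / 4)
              ∂(((volume : Measure (EuclideanSpace ℝ (Fin (k + 1)))).toSphere).prod volume))) := by
  refine ⟨2 * k + 4 * (n - k : ℕ) + 16, by positivity, fun u hu h0 hd => ?_⟩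
  set μ := (volume : Measure (EuclideanSpace ℝ (Fin (k + 1)))).toSphere.prod
    (volume : Measure (EuclideanSpace ℝ (Fin (n - k))))
  have hA : 0 ≤ ∫ p, u p ^ 2 * exp (-(2 * k + ‖p.2‖ ^ 2) / 4) ∂μ :=
    integral_nonneg fun p => by positivity
  have hB : 0 ≤ ∫ p, ‖gradient (fun y => u (p.1, y)) p.2‖ ^ 2 *
      exp (-(2 * k + ‖p.2‖ ^ 2) / 4) ∂μ :=
    integral_nonneg fun p => by positivity
  by_cases hI : Integrable (fun p => (2 * k + ‖p.2‖ ^ 2) * u p ^ 2 *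
      exp (-(2 * k + ‖p.2‖ ^ 2) / 4)) μ
  · have h1 : Integrable (fun p => ‖p.2‖ ^ 2 * u p ^ 2 * exp (-(2 * k + ‖p.2‖ ^ 2) / 4)) μ :=
      (hI.sub (h0.const_mul (2 * k))).congr (ae_of_all _ fun p => by
        simp only [Pi.sub_apply]; ring)
    have hsplit : ∫ p, (2 * k + ‖p.2‖ ^ 2) * u p ^ 2 * exp (-(2 * k + ‖p.2‖ ^ 2) / 4) ∂μ =
        2 * k * (∫ p, u p ^ 2 * exp (-(2 * k + ‖p.2‖ ^ 2) / 4) ∂μ) +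
          ∫ p, ‖p.2‖ ^ 2 * u p ^ 2 * exp (-(2 * k + ‖p.2‖ ^ 2) / 4) ∂μ := by
      rw [← integral_const_mul, ← integral_add (h0.const_mul _) h1]
      congr 1 with p
      ring
    have hY := integral_prod_norm_sq_mul_sq_gaussian_le _ hu _ h0 h1 hd
    rw [finrank_euclideanSpace_fin] at hY
    rw [hsplit]
    nlinarith
  · rw [integral_undef hI]
    positivity

/-- **Gaussian Poincaré inequality on the cylinder** `Σ = S^k_{√(2k)} × ℝ^{n-k} ⊂ ℝ^{n+1}`.
The cylinder is parametrized by `(θ, y) ∈ S^k × ℝ^{n-k}` (unit sphere, the point of `Σ` being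
`(√(2k)·θ, y)`, so that `|x|² = 2k + |y|²` on `Σ`), with the surface measure the product of the
spherical measure `volume.toSphere` and Lebesgue measure (this parametrizing measure agrees with
the surface measure of `Σ` up to a constant depending only on `k`, which is absorbed in `C`).
There exists `C = C(k,n)` so that for every `u` in the Gaussian Sobolev space `W^{1,2}`:
`∫_Σ |x|² u² e^{-|x|²/4} ≤ C (∫_Σ u² e^{-|x|²/4} + ∫_Σ |∇_{ℝ^{n-k}} u|² e^{-|x|²/4})`,
where `∇_{ℝ^{n-k}}` is the gradient in the Euclidean factor directions only. -/
theorem stmt_9 (k n : ℕ) (hk : 1 ≤ k) (hkn : k < n) :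
    ∃ C : ℝ, 0 < C ∧
      ∀ u : (Metric.sphere (0 : EuclideanSpace ℝ (Fin (k + 1))) 1 ×
          EuclideanSpace ℝ (Fin (n - k))) → ℝ,
        (∀ θ, Differentiable ℝ (fun y => u (θ, y))) →
        Integrable (fun p => u p ^ 2 * Real.exp (-(2 * k + ‖p.2‖ ^ 2) / 4))
          (((volume : Measure (EuclideanSpace ℝ (Fin (k + 1)))).toSphere).prod volume) →
        Integrable
          (fun p => ‖gradient (fun y => u (p.1, y)) p.2‖ ^ 2 *
            Real.exp (-(2 * k + ‖p.2‖ ^ 2) / 4))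
          (((volume : Measure (EuclideanSpace ℝ (Fin (k + 1)))).toSphere).prod volume) →
        (∫ p, (2 * k + ‖p.2‖ ^ 2) * u p ^ 2 * Real.exp (-(2 * k + ‖p.2‖ ^ 2) / 4)
            ∂(((volume : Measure (EuclideanSpace ℝ (Fin (k + 1)))).toSphere).prod volume)) ≤
          C * ((∫ p, u p ^ 2 * Real.exp (-(2 * k + ‖p.2‖ ^ 2) / 4)
              ∂(((volume : Measure (EuclideanSpace ℝ (Fin (k + 1)))).toSphere).prod volume)) +
            (∫ p, ‖gradient (fun y => u (p.1, y)) p.2‖ ^ 2 *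
              Real.exp (-(2 * k + ‖p.2‖ ^ 2) / 4)
              ∂(((volume : Measure (EuclideanSpace ℝ (Fin (k + 1)))).toSphere).prod volume))) :=
  stmt_9_general k n
end

section
/- Interpolation inequality on Euclidean balls: there exists C = C(k,n) so that for any C^k function u on B_{2r} ⊂ ℝⁿ, ‖u‖_{L^∞(B_r)} ≤ C( r^{-n}‖u‖_{L¹(B_{2r})} + ‖u‖_{L¹(B_{2r})}^{k/(k+n)}·‖∇^k u‖_{L^∞(B_{2r})}^{n/(k+n)} ). -/
/-!
Fix `x ∈ B_r` and a scale `0 < δ ≤ r`. For `‖h‖ ≤ δ / k` the `k`-th forward difference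
`Δ_h^k u x = ∑ⱼ (-1)^(k-j) (k choose j) u (x + j • h)` is at most `M ‖h‖^k ≤ M δ^k` (mean value
theorem and induction on `k`), so `|u x| ≤ M δ^k + ∑_{j ≥ 1} (k choose j) |u (x + j • h)|`.
Averaging over `h ∈ B_{δ/k}` and substituting `y = x + j • h`, each term on the right is at most
`‖u‖_{L¹(B_{2r})}`; as `|B_{δ/k}| = (δ/k)^n |B_1|`, this gives
`|u x| ≤ M δ^k + 2^k k^n |B_1|⁻¹ δ^{-n} ‖u‖_{L¹(B_{2r})}`. The choice
`δ = min r (‖u‖_{L¹} / M)^{1/(k+n)}` balances the two terms.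
-/

open MeasureTheory Finset Set Metric Module Filter Topology fwdDiff

universe u

theorem norm_le_norm_fwdDiff_iter_add_sum {M F : Type*} [AddCommMonoid M]
    [SeminormedAddCommGroup F] (f : M → F) (h y : M) (k : ℕ) :
    ‖f y‖ ≤ ‖(Δ_[h])^[k] f y‖ + ∑ j ∈ range k, (k.choose (j + 1) : ℝ) * ‖f (y + (j + 1) • h)‖ := by
  rw [fwdDiff_iter_eq_sum_shift, sum_range_succ']
  set S := ∑ j ∈ range k, ((-1 : ℤ) ^ (k - (j + 1)) * k.choose (j + 1)) • f (y + (j + 1) • h)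
  have hS : ‖S‖ ≤ ∑ j ∈ range k, (k.choose (j + 1) : ℝ) * ‖f (y + (j + 1) • h)‖ := by
    refine (norm_sum_le _ _).trans (sum_le_sum fun j _ => (norm_zsmul_le _ _).trans_eq ?_)
    simp
  have hy : ‖((-1 : ℤ) ^ (k - 0) * k.choose 0) • f (y + (0 : ℕ) • h)‖ = ‖f y‖ := by
    rcases neg_one_pow_eq_or ℤ k with hk | hk <;> simp [hk]
  calc ‖f y‖ = ‖(S + ((-1 : ℤ) ^ (k - 0) * k.choose 0) • f (y + (0 : ℕ) • h)) - S‖ := by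
        rw [add_sub_cancel_left, hy]
    _ ≤ _ := (norm_sub_le _ _).trans (by gcongr)

theorem add_smul_mem_closedBall {E : Type*} [SeminormedAddCommGroup E] [NormedSpace ℝ E]
    (x : E) {h : E} {t c ρ : ℝ} (ht : 0 ≤ t) (htc : t ≤ c) (hh : ‖h‖ ≤ ρ) :
    x + t • h ∈ closedBall x (c * ρ) := by
  rw [mem_closedBall, dist_self_add_left, norm_smul, Real.norm_of_nonneg ht]
  exact mul_le_mul htc hh (norm_nonneg h) (ht.trans htc)

theorem hasFDerivAt_fwdDiff_iter {E F : Type*} [NormedAddCommGroup E] [NormedSpace ℝ E]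
    [NormedAddCommGroup F] [NormedSpace ℝ F] {f : E → F} {f' : E → E →L[ℝ] F} {h y : E} {k : ℕ}
    (hf : ∀ j ≤ k, HasFDerivAt f (f' (y + j • h)) (y + j • h)) :
    HasFDerivAt ((Δ_[h])^[k] f) ((Δ_[h])^[k] f' y) y := by
  have hΔ : (Δ_[h])^[k] f = fun z => ∑ j ∈ range (k + 1),
      ((-1 : ℤ) ^ (k - j) * k.choose j) • f (z + j • h) :=
    funext (fwdDiff_iter_eq_sum_shift h f k)
  rw [hΔ, fwdDiff_iter_eq_sum_shift]
  refine HasFDerivAt.fun_sum fun j hj => HasFDerivAt.fun_const_smul ?_ _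
  exact (hf j (Nat.lt_succ_iff.mp (mem_range.mp hj))).comp y ((hasFDerivAt_id y).add_const _)

section IteratedDerivativeBound

variable {E F : Type u} [NormedAddCommGroup E] [NormedSpace ℝ E] [NormedAddCommGroup F]
  [NormedSpace ℝ F]

theorem norm_fwdDiff_iter_le_of_norm_iteratedFDerivWithin_le {s : Set E} (hs : IsOpen s)
    {k : ℕ} {f : E → F} {M : ℝ} (hf : ContDiffOn ℝ k f s)
    (hM : ∀ y ∈ s, ‖iteratedFDerivWithin ℝ k f s y‖ ≤ M) {x h : E}
    (hxh : ∀ t ∈ Icc (0 : ℝ) k, x + t • h ∈ s) :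
    ‖(Δ_[h])^[k] f x‖ ≤ M * ‖h‖ ^ k := by
  induction k generalizing F x with
  | zero =>
    have hx : x ∈ s := by simpa using hxh 0 (by simp)
    simpa using hM x hx
  | succ k ih =>
    set f' := fderivWithin ℝ f s
    have hf' : ContDiffOn ℝ k f' s := hf.fderivWithin hs.uniqueDiffOn (by norm_cast)
    have hM' : ∀ y ∈ s, ‖iteratedFDerivWithin ℝ k f' s y‖ ≤ M := fun y hy => by
      rw [norm_iteratedFDerivWithin_fderivWithin hs.uniqueDiffOn hy]
      exact hM y hy
    have hseg : ∀ y ∈ segment ℝ x (x + h), ∀ t ∈ Icc (0 : ℝ) k, y + t • h ∈ s := by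
      rintro _ ⟨a, b, ha, hb, hab, rfl⟩ t ht
      have : a • x + b • (x + h) + t • h = x + (b + t) • h := by
        rw [smul_add, add_smul, ← add_assoc, ← add_smul, hab, one_smul, add_assoc]
      rw [this]
      exact hxh _ ⟨by linarith [ht.1], by push_cast; linarith [ht.2, hab]⟩
    have hderiv : ∀ y ∈ segment ℝ x (x + h),
        HasFDerivWithinAt ((Δ_[h])^[k] f) ((Δ_[h])^[k] f' y) (segment ℝ x (x + h)) y := by
      intro y hy
      refine (hasFDerivAt_fwdDiff_iter fun j hj => ?_).hasFDerivWithinAt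
      have hmem : y + j • h ∈ s := by
        rw [← Nat.cast_smul_eq_nsmul ℝ]
        exact hseg y hy j ⟨j.cast_nonneg, by exact_mod_cast hj⟩
      exact ((hf.differentiableOn (by simp)).differentiableAt
        (hs.mem_nhds hmem)).hasFDerivAt.congr_fderiv (fderivWithin_of_isOpen hs hmem).symm
    have hbound : ∀ y ∈ segment ℝ x (x + h), ‖(Δ_[h])^[k] f' y‖ ≤ M * ‖h‖ ^ k :=
      fun y hy => ih hf' hM' (hseg y hy)
    calc ‖(Δ_[h])^[k + 1] f x‖ = ‖(Δ_[h])^[k] f (x + h) - (Δ_[h])^[k] f x‖ := by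
          rw [Function.iterate_succ_apply']; rfl
      _ ≤ M * ‖h‖ ^ k * ‖x + h - x‖ :=
        (convex_segment _ _).norm_image_sub_le_of_norm_hasFDerivWithin_le hderiv hbound
          (left_mem_segment ℝ _ _) (right_mem_segment ℝ _ _)
      _ = M * ‖h‖ ^ (k + 1) := by rw [add_sub_cancel_left, pow_succ, mul_assoc]

theorem norm_le_mul_pow_add_sum_norm_shift {s : Set E} (hs : IsOpen s) {k : ℕ} (hk : 1 ≤ k)
    {u : E → F} {M : ℝ} (hu : ContDiffOn ℝ k u s)
    (hM : ∀ y ∈ s, ‖iteratedFDerivWithin ℝ k u s y‖ ≤ M) {x h : E} {δ : ℝ}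
    (hxδ : closedBall x δ ⊆ s) (hh : k * ‖h‖ ≤ δ) :
    ‖u x‖ ≤ M * δ ^ k +
      ∑ j ∈ range k, (k.choose (j + 1) : ℝ) * ‖u (x + ((j + 1 : ℕ) : ℝ) • h)‖ := by
  have hseg : ∀ t ∈ Icc (0 : ℝ) k, x + t • h ∈ s := fun t ht =>
    hxδ (closedBall_subset_closedBall hh (add_smul_mem_closedBall x ht.1 ht.2 le_rfl))
  have hM0 : 0 ≤ M := (norm_nonneg _).trans (hM x (by simpa using hseg 0 (by simp)))
  have hhδ : ‖h‖ ≤ δ := le_trans (le_mul_of_one_le_left (norm_nonneg h) (by exact_mod_cast hk)) hh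
  calc ‖u x‖ ≤ ‖(Δ_[h])^[k] u x‖ +
        ∑ j ∈ range k, (k.choose (j + 1) : ℝ) * ‖u (x + (j + 1) • h)‖ :=
        norm_le_norm_fwdDiff_iter_add_sum u h x k
    _ ≤ M * δ ^ k +
        ∑ j ∈ range k, (k.choose (j + 1) : ℝ) * ‖u (x + ((j + 1 : ℕ) : ℝ) • h)‖ := by
      simp_rw [Nat.cast_smul_eq_nsmul]
      gcongr
      exact (norm_fwdDiff_iter_le_of_norm_iteratedFDerivWithin_le hs hu hM hseg).trans
        (by gcongr)

theorem isBounded_image_of_norm_iteratedFDerivWithin_le {s : Set E} (hs : IsOpen s)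
    (hsc : Convex ℝ s) (hsb : Bornology.IsBounded s) {k : ℕ} {f : E → F} {M : ℝ}
    (hf : ContDiffOn ℝ k f s) (hM : ∀ y ∈ s, ‖iteratedFDerivWithin ℝ k f s y‖ ≤ M) :
    Bornology.IsBounded (f '' s) := by
  induction k generalizing F with
  | zero =>
    refine isBounded_iff_forall_norm_le.2 ⟨M, ?_⟩
    rintro _ ⟨y, hy, rfl⟩
    simpa using hM y hy
  | succ k ih =>
    have hf' : ContDiffOn ℝ k (fderivWithin ℝ f s) s :=
      hf.fderivWithin hs.uniqueDiffOn (by norm_cast)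
    obtain ⟨C, hC0, hC⟩ := (ih hf' fun y hy => by
      rw [norm_iteratedFDerivWithin_fderivWithin hs.uniqueDiffOn hy]
      exact hM y hy).exists_pos_norm_le
    obtain ⟨D, hD⟩ := isBounded_iff.1 hsb
    refine isBounded_image_iff.2 ⟨C * D, fun x hx y hy => ?_⟩
    rw [dist_eq_norm]
    calc ‖f x - f y‖ ≤ C * ‖x - y‖ :=
          hsc.norm_image_sub_le_of_norm_hasFDerivWithin_le
            (fun z hz => ((hf.differentiableOn (by simp)) z hz).hasFDerivWithinAt)
            (fun z hz => hC _ (mem_image_of_mem _ hz)) hy hx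
      _ ≤ C * D := by rw [← dist_eq_norm]; gcongr; exact hD hx hy

end IteratedDerivativeBound

section AddHaar

variable {E : Type*} [NormedAddCommGroup E] [NormedSpace ℝ E] [FiniteDimensional ℝ E]
  [MeasurableSpace E] [BorelSpace E] (μ : Measure E) [μ.IsAddHaarMeasure]

theorem setIntegral_ball_comp_add_smul {F : Type*} [NormedAddCommGroup F] [NormedSpace ℝ F]
    (g : E → F) (x : E) {c : ℝ} (hc : 0 < c) (ρ : ℝ) :
    ∫ h in ball 0 ρ, g (x + c • h) ∂μ = (c ^ finrank ℝ E)⁻¹ • ∫ y in ball x (c * ρ), g y ∂μ := by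
  have hball : ball (0 : E) (c * ρ) = (x + ·) ⁻¹' ball x (c * ρ) := by simp [preimage_add_ball]
  rw [Measure.setIntegral_comp_smul_of_pos μ (fun y => g (x + y)) _ hc,
    _root_.smul_ball hc.ne', smul_zero, Real.norm_of_nonneg hc.le, hball,
    (measurePreserving_add_left μ x).setIntegral_preimage_emb (measurableEmbedding_addLeft x)]

theorem setIntegral_ball_comp_add_smul_le {g : E → ℝ} {s : Set E} (hg : IntegrableOn g s μ)
    (hg0 : ∀ y, 0 ≤ g y) {x : E} {c ρ : ℝ} (hc : 1 ≤ c) (hs : ball x (c * ρ) ⊆ s) :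
    ∫ h in ball 0 ρ, g (x + c • h) ∂μ ≤ ∫ y in s, g y ∂μ := by
  have hball : 0 ≤ ∫ y in ball x (c * ρ), g y ∂μ :=
    setIntegral_nonneg measurableSet_ball fun y _ => hg0 y
  rw [setIntegral_ball_comp_add_smul μ g x (by linarith), smul_eq_mul]
  calc (c ^ finrank ℝ E)⁻¹ * ∫ y in ball x (c * ρ), g y ∂μ ≤ ∫ y in ball x (c * ρ), g y ∂μ :=
        mul_le_of_le_one_left hball (inv_le_one_of_one_le₀ (one_le_pow₀ hc))
    _ ≤ ∫ y in s, g y ∂μ := setIntegral_mono_set hg (.of_forall hg0) (.of_forall hs)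

end AddHaar

section Averaging

variable {E F : Type u} [NormedAddCommGroup E] [NormedSpace ℝ E] [FiniteDimensional ℝ E]
  [MeasurableSpace E] [BorelSpace E] (μ : Measure E) [μ.IsAddHaarMeasure] [NormedAddCommGroup F]
  [NormedSpace ℝ F]

theorem measureReal_ball_mul_norm_le {s : Set E} (hs : IsOpen s) {k : ℕ} (hk : 1 ≤ k)
    {u : E → F} {M : ℝ} (hu : ContDiffOn ℝ k u s)
    (hM : ∀ y ∈ s, ‖iteratedFDerivWithin ℝ k u s y‖ ≤ M) (hint : IntegrableOn (‖u ·‖) s μ)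
    {x : E} {ρ : ℝ} (hρ : 0 ≤ ρ) (hxρ : closedBall x (k * ρ) ⊆ s) :
    μ.real (ball 0 ρ) * ‖u x‖ ≤
      μ.real (ball 0 ρ) * (M * (k * ρ) ^ k) + 2 ^ k * ∫ y in s, ‖u y‖ ∂μ := by
  set I := ∫ y in s, ‖u y‖ ∂μ
  set B := ball (0 : E) ρ
  have hc : ∀ j ∈ range k, 1 ≤ ((j + 1 : ℕ) : ℝ) ∧ ((j + 1 : ℕ) : ℝ) ≤ k := fun j hj =>
    ⟨by exact_mod_cast Nat.succ_pos j, by exact_mod_cast mem_range.mp hj⟩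
  have hpt : ∀ h ∈ B, ‖u x‖ ≤ M * (k * ρ) ^ k +
      ∑ j ∈ range k, (k.choose (j + 1) : ℝ) * ‖u (x + ((j + 1 : ℕ) : ℝ) • h)‖ := fun h hh =>
    norm_le_mul_pow_add_sum_norm_shift hs hk hu hM hxρ
      (mul_le_mul_of_nonneg_left (mem_ball_zero_iff.mp hh).le k.cast_nonneg)
  have hint_shift : ∀ j ∈ range k, IntegrableOn (fun h => ‖u (x + ((j + 1 : ℕ) : ℝ) • h)‖) B μ :=
    fun j hj => ((hu.continuousOn.norm.comp (by fun_prop) fun h hh =>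
      hxρ (add_smul_mem_closedBall x (by positivity) (hc j hj).2
        (mem_closedBall_zero_iff.mp hh))).integrableOn_compact
          (isCompact_closedBall 0 ρ)).mono_set ball_subset_closedBall
  have hle_shift : ∀ j ∈ range k, ∫ h in B, ‖u (x + ((j + 1 : ℕ) : ℝ) • h)‖ ∂μ ≤ I :=
    fun j hj => setIntegral_ball_comp_add_smul_le μ hint (fun _ => norm_nonneg _) (hc j hj).1
      (ball_subset_closedBall.trans <| (closedBall_subset_closedBall <|
        mul_le_mul_of_nonneg_right (hc j hj).2 hρ).trans hxρ)
  have hchoose : ∑ j ∈ range k, (k.choose (j + 1) : ℝ) ≤ 2 ^ k := by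
    have := Nat.sum_range_choose k
    rw [sum_range_succ'] at this
    exact_mod_cast (Nat.le_add_right _ _).trans this.le
  have hint_sum : IntegrableOn (fun h => ∑ j ∈ range k,
      (k.choose (j + 1) : ℝ) * ‖u (x + ((j + 1 : ℕ) : ℝ) • h)‖) B μ :=
    integrable_finsetSum _ fun j hj => (hint_shift j hj).const_mul _
  have hint_const : IntegrableOn (fun _ => M * (k * ρ) ^ k) B μ :=
    integrableOn_const measure_ball_lt_top.ne
  calc μ.real B * ‖u x‖ = ∫ _ in B, ‖u x‖ ∂μ := by rw [setIntegral_const, smul_eq_mul]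
    _ ≤ ∫ h in B, (M * (k * ρ) ^ k +
          ∑ j ∈ range k, (k.choose (j + 1) : ℝ) * ‖u (x + ((j + 1 : ℕ) : ℝ) • h)‖) ∂μ :=
      setIntegral_mono_on (integrableOn_const measure_ball_lt_top.ne)
        (hint_const.add hint_sum) measurableSet_ball hpt
    _ = μ.real B * (M * (k * ρ) ^ k) +
          ∑ j ∈ range k, (k.choose (j + 1) : ℝ) *
            ∫ h in B, ‖u (x + ((j + 1 : ℕ) : ℝ) • h)‖ ∂μ := by
      rw [integral_add hint_const hint_sum, setIntegral_const,
        smul_eq_mul, integral_finsetSum _ fun j hj => (hint_shift j hj).const_mul _]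
      simp_rw [integral_const_mul]
    _ ≤ μ.real B * (M * (k * ρ) ^ k) + (∑ j ∈ range k, (k.choose (j + 1) : ℝ)) * I := by
      rw [sum_mul]
      gcongr with j hj
      exact hle_shift j hj
    _ ≤ μ.real B * (M * (k * ρ) ^ k) + 2 ^ k * I := by gcongr

theorem norm_le_mul_pow_add_integral_div_pow {s : Set E} (hs : IsOpen s) {k : ℕ} (hk : 1 ≤ k)
    {u : E → F} {M : ℝ} (hu : ContDiffOn ℝ k u s)
    (hM : ∀ y ∈ s, ‖iteratedFDerivWithin ℝ k u s y‖ ≤ M) (hint : IntegrableOn (‖u ·‖) s μ)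
    {x : E} {δ : ℝ} (hδ : 0 < δ) (hxδ : closedBall x δ ⊆ s) :
    ‖u x‖ ≤ M * δ ^ k + 2 ^ k * k ^ finrank ℝ E / μ.real (ball 0 1) *
      ((∫ y in s, ‖u y‖ ∂μ) / δ ^ finrank ℝ E) := by
  set d := finrank ℝ E
  set I := ∫ y in s, ‖u y‖ ∂μ
  have hk0 : (0 : ℝ) < k := by exact_mod_cast hk
  have hkδ : k * (δ / k) = δ := mul_div_cancel₀ δ hk0.ne'
  have havg := measureReal_ball_mul_norm_le μ hs hk hu hM hint (by positivity) (hkδ ▸ hxδ)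
  rw [hkδ, Measure.real, Measure.addHaar_ball_of_pos μ 0 (by positivity), ENNReal.toReal_mul,
    ENNReal.toReal_ofReal (by positivity), ← Measure.real] at havg
  have hω : 0 < μ.real (ball (0 : E) 1) :=
    ENNReal.toReal_pos (measure_ball_pos μ 0 one_pos).ne' measure_ball_lt_top.ne
  have hdiv : ‖u x‖ - M * δ ^ k ≤ 2 ^ k * I / ((δ / k) ^ d * μ.real (ball 0 1)) := by
    rw [le_div_iff₀ (by positivity)]; linarith
  have hconst : 2 ^ k * I / ((δ / k) ^ d * μ.real (ball 0 1)) =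
      2 ^ k * k ^ d / μ.real (ball 0 1) * (I / δ ^ d) := by
    rw [div_pow]; field_simp
  linarith

end Averaging

theorem le_of_forall_le_pow_mul_add_pow_div_pow {x a b A r : ℝ} {k d : ℕ} (hk : k ≠ 0)
    (ha : 0 ≤ a) (hb : 0 ≤ b) (hA : 0 ≤ A) (hr : 0 < r)
    (h : ∀ δ, 0 < δ → δ ≤ r → x ≤ b ^ (k + d) * δ ^ k + A * (a ^ (k + d) / δ ^ d)) :
    x ≤ (1 + A) * (a ^ (k + d) / r ^ d + a ^ k * b ^ d) := by
  have hP : 0 ≤ a ^ k * b ^ d := by positivity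
  have hR : 0 ≤ a ^ (k + d) / r ^ d := by positivity
  rcases le_or_gt (b * r) a with hbr | hbr
  · have hbrk : b ^ (k + d) * r ^ k ≤ a ^ (k + d) / r ^ d := by
      rw [le_div_iff₀ (by positivity)]
      calc b ^ (k + d) * r ^ k * r ^ d = (b * r) ^ (k + d) := by ring
        _ ≤ a ^ (k + d) := pow_le_pow_left₀ (by positivity) hbr _
    calc x ≤ b ^ (k + d) * r ^ k + A * (a ^ (k + d) / r ^ d) := h r hr le_rfl
      _ ≤ (1 + A) * (a ^ (k + d) / r ^ d) := by linarith
      _ ≤ (1 + A) * (a ^ (k + d) / r ^ d + a ^ k * b ^ d) := by gcongr; linarith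
  have hb0 : 0 < b := (mul_pos_iff_of_pos_right hr).1 (ha.trans_lt hbr)
  rcases ha.eq_or_lt with rfl | ha0
  · -- the optimal scale `a / b` degenerates to `0`, so let `δ → 0`
    have hlim : Tendsto (fun δ : ℝ => b ^ (k + d) * δ ^ k) (𝓝[>] 0) (𝓝 0) := by
      have hcont : Continuous (fun δ : ℝ => b ^ (k + d) * δ ^ k) := by fun_prop
      exact (hcont.tendsto' 0 0 (by simp [hk])).mono_left nhdsWithin_le_nhds
    have hx : x ≤ 0 := ge_of_tendsto hlim <| by
      filter_upwards [Ioo_mem_nhdsGT hr] with δ hδ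
      simpa [hk] using h δ hδ.1 hδ.2.le
    simpa [hk] using hx.trans (by positivity)
  · have hab : a / b ≤ r := (div_le_iff₀ hb0).2 (by linarith)
    calc x ≤ b ^ (k + d) * (a / b) ^ k + A * (a ^ (k + d) / (a / b) ^ d) :=
          h _ (div_pos ha0 hb0) hab
      _ = (1 + A) * (a ^ k * b ^ d) := by
          rw [div_pow, div_pow]; field_simp [hb0.ne', ha0.ne']; ring
      _ ≤ (1 + A) * (a ^ (k + d) / r ^ d + a ^ k * b ^ d) := by gcongr; linarith

theorem le_of_forall_le_mul_pow_add_div_pow {x I M A r : ℝ} {k d : ℕ} (hk : k ≠ 0)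
    (hI : 0 ≤ I) (hM : 0 ≤ M) (hA : 0 ≤ A) (hr : 0 < r)
    (h : ∀ δ, 0 < δ → δ ≤ r → x ≤ M * δ ^ k + A * (I / δ ^ d)) :
    x ≤ (1 + A) * (r ^ (-(d : ℝ)) * I + I ^ ((k : ℝ) / (k + d)) * M ^ ((d : ℝ) / (k + d))) := by
  have hkd : k + d ≠ 0 := by omega
  have hroot : ∀ {y : ℝ}, 0 ≤ y → (y ^ ((↑(k + d))⁻¹ : ℝ)) ^ (k + d) = y :=
    fun hy => Real.rpow_inv_natCast_pow hy hkd
  have hpow : ∀ {y : ℝ} (m : ℕ), 0 ≤ y →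
      y ^ ((m : ℝ) / (k + d)) = (y ^ ((↑(k + d))⁻¹ : ℝ)) ^ m := fun m hy => by
    rw [← Real.rpow_natCast, ← Real.rpow_mul hy]
    push_cast
    ring_nf
  have key := le_of_forall_le_pow_mul_add_pow_div_pow hk (Real.rpow_nonneg hI ((↑(k + d))⁻¹ : ℝ))
    (Real.rpow_nonneg hM ((↑(k + d))⁻¹ : ℝ)) hA hr (x := x) (d := d)
  rw [hroot hI, hroot hM] at key
  rw [hpow k hI, hpow d hM, Real.rpow_neg hr.le, Real.rpow_natCast, inv_mul_eq_div]
  exact key h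

theorem stmt_15_general (k n : ℕ) (hk : 1 ≤ k) :
    ∃ C : ℝ, 0 < C ∧
      ∀ (r M : ℝ) (u : EuclideanSpace ℝ (Fin n) → ℝ), 0 < r →
        ContDiffOn ℝ k u (Metric.ball 0 (2 * r)) →
        (∀ x ∈ Metric.ball (0 : EuclideanSpace ℝ (Fin n)) (2 * r),
          ‖iteratedFDerivWithin ℝ k u (Metric.ball 0 (2 * r)) x‖ ≤ M) →
        ∀ x ∈ Metric.ball (0 : EuclideanSpace ℝ (Fin n)) r,
          |u x| ≤ C * (r ^ (-(n : ℝ)) *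
              (∫ y in Metric.ball (0 : EuclideanSpace ℝ (Fin n)) (2 * r), |u y|) +
            (∫ y in Metric.ball (0 : EuclideanSpace ℝ (Fin n)) (2 * r), |u y|) ^
                ((k : ℝ) / (k + n)) * M ^ ((n : ℝ) / (k + n))) := by
  set A := 2 ^ k * (k : ℝ) ^ n / volume.real (ball (0 : EuclideanSpace ℝ (Fin n)) 1)
  have hA : 0 ≤ A := by positivity
  refine ⟨1 + A, by positivity, fun r M u hr hu hM x hx => ?_⟩
  have hM0 : 0 ≤ M := (norm_nonneg _).trans (hM 0 (mem_ball_self (by positivity)))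
  have hint : IntegrableOn (‖u ·‖) (ball 0 (2 * r)) := by
    obtain ⟨C, hC⟩ := (isBounded_image_of_norm_iteratedFDerivWithin_le isOpen_ball
      (convex_ball 0 _) isBounded_ball hu hM).exists_norm_le
    exact .of_bound measure_ball_lt_top
      (hu.continuousOn.norm.aestronglyMeasurable measurableSet_ball) C
      (ae_restrict_of_forall_mem measurableSet_ball fun y hy => by
        simpa using hC _ (mem_image_of_mem u hy))
  refine le_of_forall_le_mul_pow_add_div_pow (by omega) (integral_nonneg fun _ => abs_nonneg _)
    hM0 hA hr fun δ hδ hδr => ?_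
  have hsub : closedBall x δ ⊆ ball 0 (2 * r) :=
    closedBall_subset_ball' (by linarith [mem_ball.mp hx])
  simpa [Real.norm_eq_abs, finrank_euclideanSpace_fin] using
    norm_le_mul_pow_add_integral_div_pow volume isOpen_ball hk hu hM hint hδ hsub

/-- **Interpolation inequality on Euclidean balls.**  There exists `C = C(k,n)` so that for any
`C^k` function `u` on `B_{2r} ⊂ ℝⁿ` (with `M` any bound for `‖∇^k u‖` on `B_{2r}`),
`‖u‖_{L^∞(B_r)} ≤ C ( r^{-n} ‖u‖_{L¹(B_{2r})} + ‖u‖_{L¹(B_{2r})}^{k/(k+n)} · M^{n/(k+n)} )`,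
where the `L¹` norms are unweighted. -/
theorem stmt_15 (k n : ℕ) (hk : 1 ≤ k) (hn : 1 ≤ n) :
    ∃ C : ℝ, 0 < C ∧
      ∀ (r M : ℝ) (u : EuclideanSpace ℝ (Fin n) → ℝ), 0 < r →
        ContDiffOn ℝ k u (Metric.ball 0 (2 * r)) →
        (∀ x ∈ Metric.ball (0 : EuclideanSpace ℝ (Fin n)) (2 * r),
          ‖iteratedFDerivWithin ℝ k u (Metric.ball 0 (2 * r)) x‖ ≤ M) →
        ∀ x ∈ Metric.ball (0 : EuclideanSpace ℝ (Fin n)) r,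
          |u x| ≤ C * (r ^ (-(n : ℝ)) *
              (∫ y in Metric.ball (0 : EuclideanSpace ℝ (Fin n)) (2 * r), |u y|) +
            (∫ y in Metric.ball (0 : EuclideanSpace ℝ (Fin n)) (2 * r), |u y|) ^
                ((k : ℝ) / (k + n)) * M ^ ((n : ℝ) / (k + n))) :=
  stmt_15_general k n hk
end
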